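/- arXiv:2311.11366 — 12 statements merged into one kernel-verified Lean document; each statement's English description precedes it below -/
import Mathlib

section
/- The point x* = 1/(2b + γ) is the unique fixed point of g in [0,∞), it satisfies 0 < x* < 1/γ, and it is globally attracting: for every x ≥ 0 the iterates gⁿ(x) converge to x* as n → ∞. Moreover, defining T : [0,∞)² → [0,∞)² by T(x,y) = (g(y), g(x)), the point (x*, x*) is the unique fixed point of T and for every (x₀,y₀) ∈ [0,∞)² the iterates Tⁿ(x₀,y₀) converge to (x*, x*). -/
/-!
On `[0, ∞)` the best reply `g` moves every point at least halfway towards `x* = 1/(2b+γ)`: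
on the linear branch it is an affine map of slope `-γ/(2b) ∈ [-1/2, 0)` fixing `x*`, and on
the branch `x ≥ 1/γ` it jumps to `0`, which is no farther from `x*` than half of `x - x*`
because `3x* ≤ 1/γ` exactly when `γ ≤ b`. In the sup metric on the plane, `T` inherits the
same estimate towards `(x*, x*)`, and a map that halves the distance to a point on an invariant
set has that point as its only fixed point there and as the limit of all its orbits.
-/

open Filter Topology Set Function

section AttractingPoint

variable {α : Type*} {f : α → α} {s : Set α} {p : α} {K : ℝ}

theorem dist_iterate_le_pow_mul [PseudoMetricSpace α] (hs : MapsTo f s s) (hK : 0 ≤ K)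
    (hf : ∀ x ∈ s, dist (f x) p ≤ K * dist x p) {x : α} (hx : x ∈ s) (n : ℕ) :
    dist (f^[n] x) p ≤ K ^ n * dist x p := by
  induction n with
  | zero => simp
  | succ n ih =>
    rw [iterate_succ_apply', pow_succ', mul_assoc]
    exact (hf _ (hs.iterate n hx)).trans (mul_le_mul_of_nonneg_left ih hK)

theorem tendsto_iterate_of_dist_le_mul [PseudoMetricSpace α] (hs : MapsTo f s s) (hK₀ : 0 ≤ K)
    (hK₁ : K < 1) (hf : ∀ x ∈ s, dist (f x) p ≤ K * dist x p) {x : α} (hx : x ∈ s) :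
    Tendsto (fun n => f^[n] x) atTop (𝓝 p) := by
  rw [tendsto_iff_dist_tendsto_zero]
  refine squeeze_zero (fun _ => dist_nonneg) (dist_iterate_le_pow_mul hs hK₀ hf hx) ?_
  simpa using (tendsto_pow_atTop_nhds_zero_of_lt_one hK₀ hK₁).mul_const (dist x p)

theorem eq_of_isFixedPt_of_dist_le_mul [MetricSpace α] (hK : K < 1)
    (hf : ∀ x ∈ s, dist (f x) p ≤ K * dist x p) {x : α} (hx : x ∈ s) (hfx : IsFixedPt f x) :
    x = p := by
  have hle := hf x hx
  rw [hfx] at hle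
  exact dist_le_zero.1 (by nlinarith [dist_nonneg (x := x) (y := p)])

theorem mapsTo_prodMap_comp_swap (hs : MapsTo f s s) :
    MapsTo (fun q : α × α => (f q.2, f q.1)) (s ×ˢ s) (s ×ˢ s) :=
  fun _ hq => ⟨hs hq.2, hs hq.1⟩

theorem dist_prodMap_comp_swap_le [PseudoMetricSpace α] (hK : 0 ≤ K)
    (hf : ∀ x ∈ s, dist (f x) p ≤ K * dist x p) :
    ∀ q ∈ s ×ˢ s, dist (f q.2, f q.1) (p, p) ≤ K * dist q (p, p) := by
  intro q hq
  rw [Prod.dist_eq, Prod.dist_eq, mul_max_of_nonneg _ _ hK]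
  exact max_le (le_max_of_le_right (hf _ hq.2)) (le_max_of_le_left (hf _ hq.1))

end AttractingPoint

theorem one_div_two_mul_add_lt_one_div {b γ : ℝ} (hb : 0 < b) (hγ : 0 < γ) :
    1 / (2 * b + γ) < 1 / γ :=
  one_div_lt_one_div_of_lt hγ (by linarith)

structure IsBestReply (b γ : ℝ) (g : ℝ → ℝ) : Prop where
  eq_of_lt : ∀ x, 0 ≤ x → x < 1 / γ → g x = 1 / (2 * b) - γ / (2 * b) * x
  eq_zero_of_le : ∀ x, 1 / γ ≤ x → g x = 0

namespace IsBestReply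

variable {b γ : ℝ} {g : ℝ → ℝ}

theorem mapsTo (hg : IsBestReply b γ g) (hb : 0 < b) (hγ : 0 < γ) :
    MapsTo g (Ici 0) (Ici 0) := by
  intro x (hx : 0 ≤ x)
  show 0 ≤ g x
  rcases lt_or_ge x (1 / γ) with hlt | hge
  · have hγx : γ * x < 1 := by rwa [lt_div_iff₀ hγ, mul_comm] at hlt
    rw [hg.eq_of_lt x hx hlt, show 1 / (2 * b) - γ / (2 * b) * x = (1 - γ * x) / (2 * b) by ring]
    exact div_nonneg (by linarith) (by linarith)
  · exact (hg.eq_zero_of_le x hge).ge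

theorem apply_one_div_two_mul_add (hg : IsBestReply b γ g) (hb : 0 < b) (hγ : 0 < γ) :
    g (1 / (2 * b + γ)) = 1 / (2 * b + γ) := by
  rw [hg.eq_of_lt _ (by positivity) (one_div_two_mul_add_lt_one_div hb hγ)]
  field_simp
  ring

theorem dist_le_half_mul (hg : IsBestReply b γ g) (hbγ : γ ≤ b) (hγ : 0 < γ) :
    ∀ x ∈ Ici (0 : ℝ), dist (g x) (1 / (2 * b + γ)) ≤ 1 / 2 * dist x (1 / (2 * b + γ)) := by
  intro x (hx : 0 ≤ x)
  have hb : 0 < b := hγ.trans_le hbγ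
  set xs := 1 / (2 * b + γ) with hxs
  rw [Real.dist_eq, Real.dist_eq]
  rcases lt_or_ge x (1 / γ) with hlt | hge
  · have hlin : g x - xs = -(γ / (2 * b)) * (x - xs) := by
      rw [hg.eq_of_lt x hx hlt, hxs]
      field_simp
      ring
    have hslope : γ / (2 * b) ≤ 1 / 2 := by
      rw [div_le_iff₀ (by positivity)]
      linarith
    rw [hlin, abs_mul, abs_neg, abs_of_pos (by positivity)]
    exact mul_le_mul_of_nonneg_right hslope (abs_nonneg _)
  · have hthree : 3 * xs ≤ 1 / γ := by
      rw [hxs, ← mul_div_assoc, mul_one, div_le_div_iff₀ (by positivity) hγ]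
      linarith
    have hxs_pos : 0 < xs := by positivity
    rw [hg.eq_zero_of_le x hge, zero_sub, abs_neg, abs_of_pos hxs_pos,
      abs_of_nonneg (by linarith)]
    linarith

end IsBestReply

/-- For the complete-information best-reply map g on [0,∞),
x* = 1/(2b+γ) is the unique fixed point in [0,∞), 0 < x* < 1/γ, and it is
globally attracting; moreover (x*,x*) is the unique fixed point of
T(x,y) = (g y, g x) in [0,∞)² and all orbits of T starting in [0,∞)² converge to it. -/
theorem cournot_nash_global_stability (b γ : ℝ) (hbγ : b ≥ γ) (hγ : 0 < γ)
    (g : ℝ → ℝ)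
    (hg1 : ∀ x : ℝ, 0 ≤ x → x < 1 / γ → g x = 1 / (2 * b) - (γ / (2 * b)) * x)
    (hg2 : ∀ x : ℝ, 1 / γ ≤ x → g x = 0)
    (T : ℝ × ℝ → ℝ × ℝ) (hT : ∀ x y : ℝ, T (x, y) = (g y, g x)) :
    g (1 / (2 * b + γ)) = 1 / (2 * b + γ) ∧
    (∀ x : ℝ, 0 ≤ x → g x = x → x = 1 / (2 * b + γ)) ∧
    0 < 1 / (2 * b + γ) ∧ 1 / (2 * b + γ) < 1 / γ ∧
    (∀ x : ℝ, 0 ≤ x →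
      Filter.Tendsto (fun n => g^[n] x) Filter.atTop (nhds (1 / (2 * b + γ)))) ∧
    T (1 / (2 * b + γ), 1 / (2 * b + γ)) = (1 / (2 * b + γ), 1 / (2 * b + γ)) ∧
    (∀ p : ℝ × ℝ, 0 ≤ p.1 → 0 ≤ p.2 → T p = p →
      p = (1 / (2 * b + γ), 1 / (2 * b + γ))) ∧
    (∀ x₀ y₀ : ℝ, 0 ≤ x₀ → 0 ≤ y₀ →
      Filter.Tendsto (fun n => T^[n] (x₀, y₀)) Filter.atTop
        (nhds (1 / (2 * b + γ), 1 / (2 * b + γ)))) := by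
  have hb : 0 < b := hγ.trans_le hbγ
  have hg : IsBestReply b γ g := ⟨hg1, hg2⟩
  have hfix := hg.apply_one_div_two_mul_add hb hγ
  have hmaps := hg.mapsTo hb hγ
  have hdist := hg.dist_le_half_mul hbγ hγ
  obtain rfl : T = fun q => (g q.2, g q.1) := funext fun q => hT q.1 q.2
  have hTmaps := mapsTo_prodMap_comp_swap hmaps
  have hTdist := dist_prodMap_comp_swap_le (by norm_num) hdist
  refine ⟨hfix, fun x hx hgx => eq_of_isFixedPt_of_dist_le_mul (by norm_num) hdist hx hgx,
    by positivity, one_div_two_mul_add_lt_one_div hb hγ,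
    fun x hx => tendsto_iterate_of_dist_le_mul hmaps (by norm_num) (by norm_num) hdist hx,
    by simp only [hfix], fun q hq₁ hq₂ hTq =>
      eq_of_isFixedPt_of_dist_le_mul (by norm_num) hTdist ⟨hq₁, hq₂⟩ hTq,
    fun x₀ y₀ hx₀ hy₀ =>
      tendsto_iterate_of_dist_le_mul hTmaps (by norm_num) (by norm_num) hTdist ⟨hx₀, hy₀⟩⟩
end

section
/- If r ≠ 1, then f has a unique fixed point in [0,∞). Specifically, if r < 1 the unique fixed point is x_l* = 1/(γ̲ + 2·b̄) and it lies in the open interval (0, x_l); if r > 1 the unique fixed point is x_r* = 1/(γ̄ + 2·b̲) and it lies in the open interval (x_u, x_m). -/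
/-! On each of the three non-constant pieces the fixed-point equation is linear. The middle
piece `x ↦ r x` has no positive fixed point when `r ≠ 1`, the constant piece none either, and
each outer piece has exactly one candidate, `1/(γ̲ + 2b̄)` resp. `1/(γ̄ + 2b̲)`. Comparing
`1/(a + c)` with the breakpoint `1/(a + c r)` shows that the left candidate lies in its piece
exactly when `r < 1` and the right one exactly when `r > 1`. -/

lemma div_eq_self_iff_eq_one_div {g c x : ℝ} (hc : c ≠ 0) (hgc : g + c ≠ 0) :
    (1 - g * x) / c = x ↔ x = 1 / (g + c) := by
  rw [div_eq_iff hc, eq_div_iff hgc]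
  constructor <;> intro h <;> linear_combination -h

lemma one_div_add_lt_one_div_add_mul_iff {a c r : ℝ} (hc : 0 < c) (hac : 0 < a + c)
    (hacr : 0 < a + c * r) : 1 / (a + c) < 1 / (a + c * r) ↔ r < 1 := by
  rw [one_div_lt_one_div hac hacr, add_lt_add_iff_left, mul_lt_iff_lt_one_right hc]

lemma one_div_add_mul_lt_one_div_add_iff {a c r : ℝ} (hc : 0 < c) (hac : 0 < a + c)
    (hacr : 0 < a + c * r) : 1 / (a + c * r) < 1 / (a + c) ↔ 1 < r := by
  rw [one_div_lt_one_div hacr hac, add_lt_add_iff_left, lt_mul_iff_one_lt_right hc]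

lemma fixed_point_iff_of_piecewise {f : ℝ → ℝ} {g₁ c₁ g₂ c₂ r xl xu xm x : ℝ}
    (hc₁ : c₁ ≠ 0) (hgc₁ : g₁ + c₁ ≠ 0) (hc₂ : c₂ ≠ 0) (hgc₂ : g₂ + c₂ ≠ 0)
    (hxl : 0 ≤ xl) (hxm : 0 ≤ xm) (hr : r ≠ 1)
    (hf₁ : ∀ x : ℝ, 0 ≤ x → x ≤ xl → f x = (1 - g₁ * x) / c₁)
    (hf₂ : ∀ x : ℝ, xl ≤ x → x ≤ xu → f x = r * x)
    (hf₃ : ∀ x : ℝ, xu ≤ x → x ≤ xm → f x = (1 - g₂ * x) / c₂)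
    (hf₄ : ∀ x : ℝ, xm ≤ x → f x = 0) (hx : 0 ≤ x) :
    f x = x ↔ (x = 1 / (g₁ + c₁) ∧ 1 / (g₁ + c₁) ≤ xl) ∨
      (x = 1 / (g₂ + c₂) ∧ xu ≤ 1 / (g₂ + c₂) ∧ 1 / (g₂ + c₂) ≤ xm) := by
  constructor
  · intro hfx
    rcases le_or_gt x xl with hxl' | hxl'
    · rw [hf₁ x hx hxl', div_eq_self_iff_eq_one_div hc₁ hgc₁] at hfx
      exact Or.inl ⟨hfx, hfx ▸ hxl'⟩
    rcases le_or_gt x xu with hxu' | hxu'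
    · rw [hf₂ x hxl'.le hxu', mul_eq_right₀ (hxl.trans_lt hxl').ne'] at hfx
      exact absurd hfx hr
    rcases le_or_gt x xm with hxm' | hxm'
    · rw [hf₃ x hxu'.le hxm', div_eq_self_iff_eq_one_div hc₂ hgc₂] at hfx
      exact Or.inr ⟨hfx, hfx ▸ hxu'.le, hfx ▸ hxm'⟩
    · rw [hf₄ x hxm'.le] at hfx
      exact absurd hfx (hxm.trans_lt hxm').ne
  · rintro (⟨rfl, hxl'⟩ | ⟨rfl, hxu', hxm'⟩)
    · rw [hf₁ _ hx hxl', div_eq_self_iff_eq_one_div hc₁ hgc₁]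
    · rw [hf₃ _ hxu' hxm', div_eq_self_iff_eq_one_div hc₂ hgc₂]

theorem unique_fixed_point_of_f_general
    (bU bL gU gL r xl xu xm : ℝ) (f : ℝ → ℝ)
    (h4 : gL ≥ 0)
    (h5 : 0 < bL) (h6 : bL < bU) (h7 : gL < gU)
    (hr : r = (gU - gL) / (bU - bL))
    (hxl : xl = 1 / (gL + 2 * bU * r))
    (hxu : xu = 1 / (gU + 2 * bL * r))
    (hxm : xm = 1 / gU)
    (hf1 : ∀ x : ℝ, 0 ≤ x → x ≤ xl → f x = (1 - gL * x) / (2 * bU))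
    (hf2 : ∀ x : ℝ, xl ≤ x → x ≤ xu → f x = r * x)
    (hf3 : ∀ x : ℝ, xu ≤ x → x ≤ xm → f x = (1 - gU * x) / (2 * bL))
    (hf4 : ∀ x : ℝ, xm ≤ x → f x = 0)
    (hrne : r ≠ 1) :
    (∃! x : ℝ, 0 ≤ x ∧ f x = x) ∧
    (r < 1 →
      (∀ x : ℝ, 0 ≤ x → (f x = x ↔ x = 1 / (gL + 2 * bU))) ∧
      0 < 1 / (gL + 2 * bU) ∧ 1 / (gL + 2 * bU) < xl) ∧
    (r > 1 →
      (∀ x : ℝ, 0 ≤ x → (f x = x ↔ x = 1 / (gU + 2 * bL))) ∧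
      xu < 1 / (gU + 2 * bL) ∧ 1 / (gU + 2 * bL) < xm) := by
  have hbU : 0 < bU := h5.trans h6
  have hgU : 0 < gU := h4.trans_lt h7
  have hrpos : 0 < r := hr ▸ div_pos (sub_pos.2 h7) (sub_pos.2 h6)
  have hdL : 0 < gL + 2 * bU := by positivity
  have hdR : 0 < gU + 2 * bL := by positivity
  have hdl : 0 < gL + 2 * bU * r := by positivity
  have hdu : 0 < gU + 2 * bL * r := by positivity
  have hfix : ∀ x, 0 ≤ x → (f x = x ↔
      (x = 1 / (gL + 2 * bU) ∧ 1 / (gL + 2 * bU) ≤ xl) ∨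
      (x = 1 / (gU + 2 * bL) ∧ xu ≤ 1 / (gU + 2 * bL) ∧ 1 / (gU + 2 * bL) ≤ xm)) := fun x hx =>
    fixed_point_iff_of_piecewise (by positivity) hdL.ne' (by positivity) hdR.ne'
      (hxl ▸ by positivity) (hxm ▸ by positivity) hrne hf1 hf2 hf3 hf4 hx
  have hlow : r < 1 → (∀ x : ℝ, 0 ≤ x → (f x = x ↔ x = 1 / (gL + 2 * bU))) ∧
      0 < 1 / (gL + 2 * bU) ∧ 1 / (gL + 2 * bU) < xl := fun hr1 =>
    have hLl := hxl ▸ (one_div_add_lt_one_div_add_mul_iff (by positivity) hdL hdl).2 hr1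
    have hRu := hxu ▸ (one_div_add_lt_one_div_add_mul_iff (by positivity) hdR hdu).2 hr1
    ⟨fun x hx => by
      simp only [hfix x hx, hLl.le, hRu.not_ge, and_true, false_and, and_false, or_false],
      by positivity, hLl⟩
  have hhigh : r > 1 → (∀ x : ℝ, 0 ≤ x → (f x = x ↔ x = 1 / (gU + 2 * bL))) ∧
      xu < 1 / (gU + 2 * bL) ∧ 1 / (gU + 2 * bL) < xm := fun hr1 =>
    have hlL := hxl ▸ (one_div_add_mul_lt_one_div_add_iff (by positivity) hdL hdl).2 hr1
    have huR := hxu ▸ (one_div_add_mul_lt_one_div_add_iff (by positivity) hdR hdu).2 hr1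
    have hRm : 1 / (gU + 2 * bL) < xm := hxm ▸ one_div_lt_one_div_of_lt hgU (by linarith)
    ⟨fun x hx => by
      simp only [hfix x hx, hlL.not_ge, huR.le, hRm.le, and_true, and_false, false_or],
      huR, hRm⟩
  obtain ⟨c, hc, hiff⟩ : ∃ c, 0 ≤ c ∧ ∀ x, 0 ≤ x → (f x = x ↔ x = c) := by
    rcases hrne.lt_or_gt with hr1 | hr1
    · exact ⟨_, (hlow hr1).2.1.le, (hlow hr1).1⟩
    · exact ⟨_, by positivity, (hhigh hr1).1⟩
  exact ⟨⟨c, ⟨hc, (hiff c hc).2 rfl⟩, fun x hx => (hiff x hx.1).1 hx.2⟩, hlow, hhigh⟩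

/-- If r ≠ 1, f has a unique fixed point in [0,∞): for r < 1 it is
x_l* = 1/(γ̲ + 2b̄) ∈ (0, x_l); for r > 1 it is x_r* = 1/(γ̄ + 2b̲) ∈ (x_u, x_m). -/
theorem unique_fixed_point_of_f
    (bU bL gU gL r xl xu xm : ℝ) (f : ℝ → ℝ)
    (h1 : bU ≥ gU) (h2 : gU ≥ bL) (h3 : bL ≥ gL) (h4 : gL ≥ 0)
    (h5 : 0 < bL) (h6 : bL < bU) (h7 : gL < gU)
    (hr : r = (gU - gL) / (bU - bL))
    (hxl : xl = 1 / (gL + 2 * bU * r))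
    (hxu : xu = 1 / (gU + 2 * bL * r))
    (hxm : xm = 1 / gU)
    (hf1 : ∀ x : ℝ, 0 ≤ x → x ≤ xl → f x = (1 - gL * x) / (2 * bU))
    (hf2 : ∀ x : ℝ, xl ≤ x → x ≤ xu → f x = r * x)
    (hf3 : ∀ x : ℝ, xu ≤ x → x ≤ xm → f x = (1 - gU * x) / (2 * bL))
    (hf4 : ∀ x : ℝ, xm ≤ x → f x = 0)
    (hrne : r ≠ 1) :
    (∃! x : ℝ, 0 ≤ x ∧ f x = x) ∧
    (r < 1 →
      (∀ x : ℝ, 0 ≤ x → (f x = x ↔ x = 1 / (gL + 2 * bU))) ∧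
      0 < 1 / (gL + 2 * bU) ∧ 1 / (gL + 2 * bU) < xl) ∧
    (r > 1 →
      (∀ x : ℝ, 0 ≤ x → (f x = x ↔ x = 1 / (gU + 2 * bL))) ∧
      xu < 1 / (gU + 2 * bL) ∧ 1 / (gU + 2 * bL) < xm) :=
  unique_fixed_point_of_f_general bU bL gU gL r xl xu xm f h4 h5 h6 h7 hr hxl hxu hxm hf1 hf2 hf3
    hf4 hrne
end

section
/- If r = 1, then the set of fixed points of f in [0,∞) is exactly the closed interval [x_l, x_u], i.e. f(x) = x holds for every x ∈ [x_l, x_u] and for no other x ≥ 0. -/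
/-- If r = 1, the set of fixed points of f in [0,∞) is exactly
the closed interval [x_l, x_u]. -/
theorem segment_of_fixed_points
    (bU bL gU gL r xl xu xm : ℝ) (f : ℝ → ℝ)
    (h1 : bU ≥ gU) (h2 : gU ≥ bL) (h3 : bL ≥ gL) (h4 : gL ≥ 0)
    (h5 : 0 < bL) (h6 : bL < bU) (h7 : gL < gU)
    (hr : r = (gU - gL) / (bU - bL))
    (hxl : xl = 1 / (gL + 2 * bU * r))
    (hxu : xu = 1 / (gU + 2 * bL * r))
    (hxm : xm = 1 / gU)
    (hf1 : ∀ x : ℝ, 0 ≤ x → x ≤ xl → f x = (1 - gL * x) / (2 * bU))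
    (hf2 : ∀ x : ℝ, xl ≤ x → x ≤ xu → f x = r * x)
    (hf3 : ∀ x : ℝ, xu ≤ x → x ≤ xm → f x = (1 - gU * x) / (2 * bL))
    (hf4 : ∀ x : ℝ, xm ≤ x → f x = 0)
    (hr1 : r = 1) :
    ∀ x : ℝ, 0 ≤ x → (f x = x ↔ xl ≤ x ∧ x ≤ xu) := by
  subst hr1
  have hbU : 0 < bU := h5.trans h6
  have hgU : 0 < gU := lt_of_lt_of_le h5 h2
  -- gU - gL = bU - bL
  have hsub : gU - gL = bU - bL := by
    have hne : bU - bL ≠ 0 := sub_ne_zero.mpr (ne_of_gt h6)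
    field_simp at hr
    linarith [hr]
  have hxl' : xl = 1 / (gL + 2 * bU) := by rw [hxl]; ring_nf
  have hxu' : xu = 1 / (gU + 2 * bL) := by rw [hxu]; ring_nf
  have hdl : 0 < gL + 2 * bU := by linarith
  have hdu : 0 < gU + 2 * bL := by linarith
  have hxlpos : 0 < xl := by rw [hxl']; positivity
  have hxlu : xl ≤ xu := by
    rw [hxl', hxu']
    apply one_div_le_one_div_of_le hdu
    linarith
  have hxum : xu ≤ xm := by
    rw [hxu', hxm]
    apply one_div_le_one_div_of_le hgU
    linarith
  have hxmpos : 0 < xm := by rw [hxm]; positivity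
  intro x hx
  constructor
  · intro hfx
    rcases le_or_gt x xl with hle | hgt
    · -- x ≤ xl : f x = (1 - gL x)/(2 bU) = x forces x = xl
      have := hf1 x hx hle
      rw [this] at hfx
      have hxeq : x = xl := by
        rw [hxl']
        field_simp at hfx ⊢
        linarith
      exact ⟨le_of_eq hxeq.symm, hxeq ▸ hxlu⟩
    · rcases le_or_gt x xu with hle2 | hgt2
      · exact ⟨hgt.le, hle2⟩
      · rcases le_or_gt x xm with hle3 | hgt3
        · have := hf3 x hgt2.le hle3
          rw [this] at hfx
          have hxeq : x = xu := by
            rw [hxu']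
            field_simp at hfx ⊢
            linarith
          exact absurd hxeq (ne_of_gt hgt2)
        · have := hf4 x hgt3.le
          rw [this] at hfx
          linarith
  · rintro ⟨h8, h9⟩
    rw [hf2 x h8 h9, one_mul]
end

section
/- Suppose x* is a fixed point of f with 0 < x* < x_l. Then x* is locally asymptotically stable: there exists ε > 0 such that for every x ≥ 0 with |x − x*| < ε one has |fⁿ(x) − x*| ≤ |x − x*| for all n ≥ 0 and fⁿ(x) → x* as n → ∞. -/
/-- A fixed point of f in the open left side (0, x_l) is locally
asymptotically stable. -/
theorem left_fixed_point_locally_stable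
    (bU bL gU gL r xl xu xm : ℝ) (f : ℝ → ℝ)
    (h1 : bU ≥ gU) (h2 : gU ≥ bL) (h3 : bL ≥ gL) (h4 : gL ≥ 0)
    (h5 : 0 < bL) (h6 : bL < bU) (h7 : gL < gU)
    (hr : r = (gU - gL) / (bU - bL))
    (hxl : xl = 1 / (gL + 2 * bU * r))
    (hxu : xu = 1 / (gU + 2 * bL * r))
    (hxm : xm = 1 / gU)
    (hf1 : ∀ x : ℝ, 0 ≤ x → x ≤ xl → f x = (1 - gL * x) / (2 * bU))
    (hf2 : ∀ x : ℝ, xl ≤ x → x ≤ xu → f x = r * x)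
    (hf3 : ∀ x : ℝ, xu ≤ x → x ≤ xm → f x = (1 - gU * x) / (2 * bL))
    (hf4 : ∀ x : ℝ, xm ≤ x → f x = 0)
    (xs : ℝ) (hfix : f xs = xs) (hxs0 : 0 < xs) (hxsl : xs < xl) :
    ∃ ε > 0, ∀ x : ℝ, 0 ≤ x → |x - xs| < ε →
      (∀ n : ℕ, |f^[n] x - xs| ≤ |x - xs|) ∧
      Filter.Tendsto (fun n => f^[n] x) Filter.atTop (nhds xs) := by
  have hbU : (0:ℝ) < bU := lt_of_le_of_lt h5.le h6
  set k : ℝ := gL / (2 * bU) with hk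
  have hk0 : 0 ≤ k := div_nonneg h4 (by linarith)
  have hk1 : k < 1 := by
    rw [hk, div_lt_one (by linarith)]
    linarith
  -- the contraction step on [0, xl]
  have hstep : ∀ y : ℝ, 0 ≤ y → y ≤ xl → |f y - xs| = k * |y - xs| := by
    intro y hy0 hyl
    have hfy := hf1 y hy0 hyl
    have hfs := hf1 xs hxs0.le hxsl.le
    have heq : xs * (2 * bU) = 1 - gL * xs := by
      have h := hfs
      rw [hfix] at h
      field_simp at h
      linarith
    have : f y - xs = -(k * (y - xs)) := by
      rw [hfy, hk]
      field_simp
      linarith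
    rw [this, abs_neg, abs_mul, abs_of_nonneg hk0]
  refine ⟨min xs (xl - xs), lt_min hxs0 (by linarith), fun x hx0 hxε => ?_⟩
  have hεxs : min xs (xl - xs) ≤ xs := min_le_left _ _
  have hεl : min xs (xl - xs) ≤ xl - xs := min_le_right _ _
  have key : ∀ n : ℕ, |f^[n] x - xs| ≤ k ^ n * |x - xs| := by
    intro n
    induction n with
    | zero => simp
    | succ n ih =>
      have hlt : |f^[n] x - xs| < min xs (xl - xs) := by
        calc |f^[n] x - xs| ≤ k ^ n * |x - xs| := ih
          _ ≤ 1 * |x - xs| := by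
              apply mul_le_mul_of_nonneg_right _ (abs_nonneg _)
              exact pow_le_one₀ hk0 hk1.le
          _ < min xs (xl - xs) := by rw [one_mul]; exact hxε
      have h0 : 0 ≤ f^[n] x := by
        have := abs_lt.1 (lt_of_lt_of_le hlt hεxs)
        linarith [this.1]
      have hl : f^[n] x ≤ xl := by
        have := abs_lt.1 (lt_of_lt_of_le hlt hεl)
        linarith [this.2]
      rw [Function.iterate_succ_apply', hstep _ h0 hl, pow_succ, mul_comm (k^n) k,
        mul_assoc]
      exact mul_le_mul_of_nonneg_left ih hk0
  constructor
  · intro n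
    calc |f^[n] x - xs| ≤ k ^ n * |x - xs| := key n
      _ ≤ 1 * |x - xs| := by
          exact mul_le_mul_of_nonneg_right (pow_le_one₀ hk0 hk1.le) (abs_nonneg _)
      _ = |x - xs| := one_mul _
  · rw [tendsto_iff_dist_tendsto_zero]
    have h1 : Filter.Tendsto (fun n : ℕ => k ^ n * |x - xs|) Filter.atTop (nhds 0) := by
      simpa using (tendsto_pow_atTop_nhds_zero_of_lt_one hk0 hk1).mul_const |x - xs|
    refine squeeze_zero (fun n => dist_nonneg) (fun n => ?_) h1
    simpa [Real.dist_eq] using key n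
end

section
/- Suppose x* is a fixed point of f with x_u < x* < x_m and suppose γ̄ < 2·b̲. Then x* is locally asymptotically stable: there exists ε > 0 such that for every x ≥ 0 with |x − x*| < ε one has |fⁿ(x) − x*| ≤ |x − x*| for all n ≥ 0 and fⁿ(x) → x* as n → ∞. -/
/-! On `(x_u, x_m)` the map `f` is affine with slope `-γ̄ / (2 b̲) ∈ (-1, 0]`, so on a ball around
the fixed point `x*` inside that interval `f` contracts the distance to `x*` by the factor
`γ̄ / (2 b̲) < 1`. Hence the orbit of a point of the ball stays in the ball and converges to `x*`
geometrically. -/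

open Filter Topology

section ContractingBall

variable {α : Type*} [PseudoMetricSpace α] {f : α → α} {a x : α} {ε k : ℝ}

theorem dist_iterate_le_pow_mul_of_contracting_ball (hk0 : 0 ≤ k) (hk1 : k ≤ 1)
    (hf : ∀ y, dist y a < ε → dist (f y) a ≤ k * dist y a) (hx : dist x a < ε) (n : ℕ) :
    dist (f^[n] x) a ≤ k ^ n * dist x a := by
  induction n with
  | zero => simp
  | succ n ih =>
    have hn : dist (f^[n] x) a < ε :=
      (ih.trans (mul_le_of_le_one_left dist_nonneg (pow_le_one₀ hk0 hk1))).trans_lt hx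
    calc dist (f^[n + 1] x) a = dist (f (f^[n] x)) a := by rw [Function.iterate_succ_apply']
      _ ≤ k * dist (f^[n] x) a := hf _ hn
      _ ≤ k * (k ^ n * dist x a) := by gcongr
      _ = k ^ (n + 1) * dist x a := by ring

theorem dist_iterate_le_of_contracting_ball (hk0 : 0 ≤ k) (hk1 : k ≤ 1)
    (hf : ∀ y, dist y a < ε → dist (f y) a ≤ k * dist y a) (hx : dist x a < ε) (n : ℕ) :
    dist (f^[n] x) a ≤ dist x a :=
  (dist_iterate_le_pow_mul_of_contracting_ball hk0 hk1 hf hx n).trans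
    (mul_le_of_le_one_left dist_nonneg (pow_le_one₀ hk0 hk1))

theorem tendsto_iterate_of_contracting_ball (hk0 : 0 ≤ k) (hk1 : k < 1)
    (hf : ∀ y, dist y a < ε → dist (f y) a ≤ k * dist y a) (hx : dist x a < ε) :
    Tendsto (fun n => f^[n] x) atTop (𝓝 a) := by
  refine tendsto_iff_dist_tendsto_zero.2 <| squeeze_zero (fun _ => dist_nonneg)
    (dist_iterate_le_pow_mul_of_contracting_ball hk0 hk1.le hf hx) ?_
  simpa using (tendsto_pow_atTop_nhds_zero_of_lt_one hk0 hk1).mul_const (dist x a)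

end ContractingBall

theorem abs_sub_eq_of_eq_affine {f : ℝ → ℝ} {c g b y z : ℝ} (hy : f y = (c - g * y) / b)
    (hz : f z = (c - g * z) / b) : |f y - f z| = |g / b| * |y - z| := by
  rw [hy, hz, ← abs_neg (g / b), ← abs_mul]
  congr 1
  ring

theorem right_fixed_point_locally_stable_general
    (bL gU xu xm : ℝ) (f : ℝ → ℝ)
    (h2 : gU ≥ bL)
    (h5 : 0 < bL)
    (hf3 : ∀ x : ℝ, xu ≤ x → x ≤ xm → f x = (1 - gU * x) / (2 * bL))
    (hslope : gU < 2 * bL)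
    (xs : ℝ) (hfix : f xs = xs) (hxsu : xu < xs) (hxsm : xs < xm) :
    ∃ ε > 0, ∀ x : ℝ, 0 ≤ x → |x - xs| < ε →
      (∀ n : ℕ, |f^[n] x - xs| ≤ |x - xs|) ∧
      Filter.Tendsto (fun n => f^[n] x) Filter.atTop (nhds xs) := by
  set k := gU / (2 * bL)
  have hk0 : 0 ≤ k := div_nonneg (by linarith) (by linarith)
  have hk1 : k < 1 := (div_lt_one (by linarith)).2 hslope
  have hcontr : ∀ y, dist y xs < min (xs - xu) (xm - xs) → dist (f y) xs ≤ k * dist y xs := by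
    intro y hy
    rw [lt_min_iff, Real.dist_eq, abs_sub_lt_iff, abs_sub_lt_iff] at hy
    have hfy := hf3 y (by linarith) (by linarith)
    have hfxs := hf3 xs hxsu.le hxsm.le
    refine le_of_eq ?_
    calc dist (f y) xs = |f y - f xs| := by rw [hfix, Real.dist_eq]
      _ = k * dist y xs := by rw [abs_sub_eq_of_eq_affine hfy hfxs, abs_of_nonneg hk0, Real.dist_eq]
  refine ⟨_, lt_min (sub_pos.2 hxsu) (sub_pos.2 hxsm), fun x _ hx => ?_⟩
  rw [← Real.dist_eq] at hx
  refine ⟨fun n => ?_, tendsto_iterate_of_contracting_ball hk0 hk1 hcontr hx⟩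
  simpa only [Real.dist_eq] using dist_iterate_le_of_contracting_ball hk0 hk1.le hcontr hx n

/-- A fixed point of f in the open right side (x_u, x_m) is locally
asymptotically stable when γ̄ < 2b̲. -/
theorem right_fixed_point_locally_stable
    (bU bL gU gL r xl xu xm : ℝ) (f : ℝ → ℝ)
    (h1 : bU ≥ gU) (h2 : gU ≥ bL) (h3 : bL ≥ gL) (h4 : gL ≥ 0)
    (h5 : 0 < bL) (h6 : bL < bU) (h7 : gL < gU)
    (hr : r = (gU - gL) / (bU - bL))
    (hxl : xl = 1 / (gL + 2 * bU * r))
    (hxu : xu = 1 / (gU + 2 * bL * r))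
    (hxm : xm = 1 / gU)
    (hf1 : ∀ x : ℝ, 0 ≤ x → x ≤ xl → f x = (1 - gL * x) / (2 * bU))
    (hf2 : ∀ x : ℝ, xl ≤ x → x ≤ xu → f x = r * x)
    (hf3 : ∀ x : ℝ, xu ≤ x → x ≤ xm → f x = (1 - gU * x) / (2 * bL))
    (hf4 : ∀ x : ℝ, xm ≤ x → f x = 0)
    (hslope : gU < 2 * bL)
    (xs : ℝ) (hfix : f xs = xs) (hxsu : xu < xs) (hxsm : xs < xm) :
    ∃ ε > 0, ∀ x : ℝ, 0 ≤ x → |x - xs| < ε →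
      (∀ n : ℕ, |f^[n] x - xs| ≤ |x - xs|) ∧
      Filter.Tendsto (fun n => f^[n] x) Filter.atTop (nhds xs) :=
  right_fixed_point_locally_stable_general bL gU xu xm f h2 h5 hf3 hslope xs hfix hxsu hxsm
end

section
/- Suppose x* is a fixed point of f with x_u < x* < x_m and suppose γ̄ > 2·b̲. Then x* is repelling: there exists ε > 0 such that for every x ≥ 0 with x ≠ x* and |x − x*| < ε there exists n ≥ 1 with |fⁿ(x) − x*| ≥ ε. -/
/-- A fixed point of f in the open right side (x_u, x_m) is repelling
when γ̄ > 2b̲. -/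
theorem right_fixed_point_repelling
    (bU bL gU gL r xl xu xm : ℝ) (f : ℝ → ℝ)
    (h1 : bU ≥ gU) (h2 : gU ≥ bL) (h3 : bL ≥ gL) (h4 : gL ≥ 0)
    (h5 : 0 < bL) (h6 : bL < bU) (h7 : gL < gU)
    (hr : r = (gU - gL) / (bU - bL))
    (hxl : xl = 1 / (gL + 2 * bU * r))
    (hxu : xu = 1 / (gU + 2 * bL * r))
    (hxm : xm = 1 / gU)
    (hf1 : ∀ x : ℝ, 0 ≤ x → x ≤ xl → f x = (1 - gL * x) / (2 * bU))
    (hf2 : ∀ x : ℝ, xl ≤ x → x ≤ xu → f x = r * x)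
    (hf3 : ∀ x : ℝ, xu ≤ x → x ≤ xm → f x = (1 - gU * x) / (2 * bL))
    (hf4 : ∀ x : ℝ, xm ≤ x → f x = 0)
    (hslope : gU > 2 * bL)
    (xs : ℝ) (hfix : f xs = xs) (hxsu : xu < xs) (hxsm : xs < xm) :
    ∃ ε > 0, ∀ x : ℝ, 0 ≤ x → x ≠ xs → |x - xs| < ε →
      ∃ n : ℕ, 1 ≤ n ∧ ε ≤ |f^[n] x - xs| := by
  classical
  set lam : ℝ := gU / (2 * bL) with hlam
  have hbl2 : (0:ℝ) < 2 * bL := by linarith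
  have hlam1 : 1 < lam := (one_lt_div hbl2).mpr hslope
  have hlam0 : 0 < lam := by linarith
  have hxs_eq : xs = (1 - gU * xs) / (2 * bL) := by
    rw [← hf3 xs hxsu.le hxsm.le, hfix]
  set ε : ℝ := min (xs - xu) (xm - xs) with hε
  have hεpos : 0 < ε := lt_min (by linarith) (by linarith)
  refine ⟨ε, hεpos, ?_⟩
  intro x hx0 hxne hxd
  have hstep : ∀ y : ℝ, |y - xs| < ε → |f y - xs| = lam * |y - xs| := by
    intro y hy
    obtain ⟨hy1, hy2⟩ := abs_lt.mp hy
    have h1' : xu ≤ y := by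
      have := min_le_left (xs - xu) (xm - xs); linarith
    have h2' : y ≤ xm := by
      have := min_le_right (xs - xu) (xm - xs); linarith
    have hfy : f y - xs = -lam * (y - xs) := by
      have hxs2 : 2 * bL * xs = 1 - gU * xs := by
        have h := hxs_eq
        field_simp at h
        linarith
      rw [hf3 y h1' h2', hlam]
      field_simp
      linarith
    rw [hfy, abs_mul, abs_neg, abs_of_pos hlam0]
  set d : ℝ := |x - xs| with hd
  have hd0 : 0 < d := abs_pos.mpr (sub_ne_zero.mpr hxne)
  have hkey : ∀ k : ℕ, (∀ j < k, lam ^ j * d < ε) → |f^[k] x - xs| = lam ^ k * d := by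
    intro k
    induction k with
    | zero => intro _; simp [hd]
    | succ k ih =>
      intro hall
      have hk : |f^[k] x - xs| = lam ^ k * d := ih fun j hj => hall j (hj.trans (Nat.lt_succ_self k))
      have hlt : |f^[k] x - xs| < ε := by rw [hk]; exact hall k (Nat.lt_succ_self k)
      rw [Function.iterate_succ_apply', hstep _ hlt, hk]
      ring
  have hP : ∃ n : ℕ, ε ≤ lam ^ n * d := by
    obtain ⟨n, hn⟩ := pow_unbounded_of_one_lt (ε / d) hlam1
    exact ⟨n, by rw [div_lt_iff₀ hd0] at hn; linarith⟩
  set n := Nat.find hP with hn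
  have hPn : ε ≤ lam ^ n * d := Nat.find_spec hP
  have hjlt : ∀ j < n, lam ^ j * d < ε := fun j hj => not_le.mp (Nat.find_min hP hj)
  have hn1 : 1 ≤ n := by
    rcases Nat.eq_zero_or_pos n with h | h
    · exfalso
      have := hPn
      rw [h] at this
      simp at this
      linarith
    · exact h
  exact ⟨n, hn1, by rw [hkey n hjlt]; exact hPn⟩
end

section
/- If r = 1, then every forward orbit of f reaches a fixed point in finitely many iterations: for every x ≥ 0 there exists n ≥ 0 such that f(fⁿ(x)) = fⁿ(x); in particular f^{n+k}(x) = fⁿ(x) for all k ≥ 0 and the eventual value lies in the interval [x_l, x_u] of fixed points. -/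
/-!
For `r = 1` the middle branch of `f` is the identity, and `x_l`, `x_u` are the fixed points of the
two outer branches, which are decreasing lines. So the left branch throws `[0, x_l)` to the right of
`x_l`, and everything to the right of `x_u` lands in `[0, x_u]`. The only way to avoid the fixed
segment is to bounce from `(x_u, x_m]` over the left branch back into `(x_u, x_m]`. The composite
of the two branches has slope at most `1` and sends `x_u` to the left of `x_l`, so each bounce moves
the point left by at least `x_u - x_l`, which can happen only finitely often.
-/

open Function Set

theorem forall_mem_of_descent {α : Type*} [AddCommGroup α] [LinearOrder α] [IsOrderedAddMonoid α]
    [Archimedean α] {S : Set α} {P : α → Prop} {u δ : α} (hδ : 0 < δ) (hS : ∀ x ∈ S, u < x)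
    (step : ∀ x ∈ S, P x ∨ ∃ y ∈ S, y ≤ x - δ ∧ (P y → P x)) :
    ∀ x ∈ S, P x := by
  suffices h : ∀ n : ℕ, ∀ x ∈ S, x ≤ u + n • δ → P x by
    intro x hx
    obtain ⟨n, hn⟩ := Archimedean.arch (x - u) hδ
    exact h n x hx (by rwa [← sub_le_iff_le_add'])
  intro n
  induction n with
  | zero =>
    intro x hx hxu
    exact absurd (hS x hx) (by simpa using hxu)
  | succ n ih =>
    intro x hx hxn
    rcases step x hx with hPx | ⟨y, hy, hyx, hPy⟩
    · exact hPx
    · refine hPy (ih y hy ?_)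
      rw [succ_nsmul, ← add_assoc] at hxn
      exact hyx.trans (sub_le_iff_le_add.2 hxn)

theorem exists_iterate_mem_Icc {f : ℝ → ℝ} {xl xu xm : ℝ} (hlu : xl < xu)
    (hleft : ∀ x, 0 ≤ x → x < xl → xl ≤ f x ∧ f x ≤ xm)
    (hright : ∀ x, xu < x → 0 ≤ f x ∧ f x ≤ xu)
    (hreturn : ∀ x, xu < x → x ≤ xm → f x < xl → f (f x) - xl ≤ x - xu) :
    ∀ x, 0 ≤ x → ∃ n, f^[n] x ∈ Icc xl xu := by
  set P : ℝ → Prop := fun x ↦ ∃ n, f^[n] x ∈ Icc xl xu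
  have of_mem : ∀ x ∈ Icc xl xu, P x := fun x hx ↦ ⟨0, hx⟩
  have of_apply : ∀ x, P (f x) → P x := fun x ⟨n, hn⟩ ↦ ⟨n + 1, by rwa [iterate_succ_apply]⟩
  have right : ∀ x ∈ Ioc xu xm, P x := by
    refine forall_mem_of_descent (sub_pos.2 hlu) (fun x hx ↦ hx.1) fun x ⟨hux, hxm⟩ ↦ ?_
    obtain ⟨hfx0, hfxu⟩ := hright x hux
    rcases le_or_gt xl (f x) with hlfx | hfxl
    · exact .inl (of_apply x (of_mem _ ⟨hlfx, hfxu⟩))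
    obtain ⟨hlffx, hffxm⟩ := hleft (f x) hfx0 hfxl
    rcases le_or_gt (f (f x)) xu with hffxu | huffx
    · exact .inl (of_apply x (of_apply (f x) (of_mem _ ⟨hlffx, hffxu⟩)))
    · exact .inr ⟨f (f x), ⟨huffx, hffxm⟩, by linarith [hreturn x hux hxm hfxl],
        fun h ↦ of_apply x (of_apply (f x) h)⟩
  have low : ∀ x, 0 ≤ x → x ≤ xu → P x := by
    intro x hx0 hxu
    rcases le_or_gt xl x with hlx | hxl
    · exact of_mem x ⟨hlx, hxu⟩
    obtain ⟨hlfx, hfxm⟩ := hleft x hx0 hxl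
    rcases le_or_gt (f x) xu with hfxu | hufx
    · exact of_apply x (of_mem _ ⟨hlfx, hfxu⟩)
    · exact of_apply x (right _ ⟨hufx, hfxm⟩)
  intro x hx0
  rcases le_or_gt x xu with hxu | hux
  · exact low x hx0 hxu
  rcases le_or_gt x xm with hxm | hmx
  · exact right x ⟨hux, hxm⟩
  · exact of_apply x (low (f x) (hright x hux).1 (hright x hux).2)

/-- A decreasing branch of `f`; its fixed point is `1 / (γ + 2 * b)`. -/
noncomputable def bestReply (b γ x : ℝ) : ℝ := (1 - γ * x) / (2 * b)

section BestReply

variable {b γ x : ℝ}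

theorem bestReply_sub_one_div (hb : 0 < b) (hγ : 0 ≤ γ) :
    bestReply b γ x - 1 / (γ + 2 * b) = γ / (2 * b) * (1 / (γ + 2 * b) - x) := by
  unfold bestReply
  field_simp
  ring

theorem one_div_le_bestReply (hb : 0 < b) (hγ : 0 ≤ γ) (hx : x ≤ 1 / (γ + 2 * b)) :
    1 / (γ + 2 * b) ≤ bestReply b γ x := by
  have := bestReply_sub_one_div (x := x) hb hγ
  have : 0 ≤ γ / (2 * b) * (1 / (γ + 2 * b) - x) :=
    mul_nonneg (by positivity) (by linarith)
  linarith

theorem bestReply_le_one_div (hb : 0 < b) (hγ : 0 ≤ γ) (hx : 1 / (γ + 2 * b) ≤ x) :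
    bestReply b γ x ≤ 1 / (γ + 2 * b) := by
  have := bestReply_sub_one_div (x := x) hb hγ
  have : γ / (2 * b) * (1 / (γ + 2 * b) - x) ≤ 0 :=
    mul_nonpos_of_nonneg_of_nonpos (by positivity) (by linarith)
  linarith

theorem bestReply_le_one_div_two_mul (hb : 0 < b) (hγ : 0 ≤ γ) (hx : 0 ≤ x) :
    bestReply b γ x ≤ 1 / (2 * b) :=
  div_le_div_of_nonneg_right (sub_le_self 1 (mul_nonneg hγ hx)) (by positivity)

theorem bestReply_nonneg (hb : 0 < b) (hx : γ * x ≤ 1) : 0 ≤ bestReply b γ x :=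
  div_nonneg (sub_nonneg.2 hx) (by positivity)

end BestReply

theorem bestReply_bestReply_sub_le {bL bU gL gU x : ℝ} (hbL : 0 < bL) (hbU : 0 < bU)
    (hgL : 0 ≤ gL) (hgLbL : gL ≤ bL) (hgU : 0 ≤ gU) (hgUbU : gU ≤ bU)
    (hlu : 1 / (gL + 2 * bU) ≤ 1 / (gU + 2 * bL)) (hx : 1 / (gU + 2 * bL) ≤ x) :
    bestReply bU gL (bestReply bL gU x) - 1 / (gL + 2 * bU) ≤ x - 1 / (gU + 2 * bL) := by
  set y := bestReply bL gU x
  have hslope : gL / (2 * bU) * (gU / (2 * bL)) ≤ 1 := by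
    rw [div_mul_div_comm, div_le_one (by positivity)]
    nlinarith [mul_le_mul hgLbL hgUbU hgU hbL.le]
  calc bestReply bU gL y - 1 / (gL + 2 * bU)
      = gL / (2 * bU) * (1 / (gL + 2 * bU) - y) := bestReply_sub_one_div hbU hgL
    _ ≤ gL / (2 * bU) * (1 / (gU + 2 * bL) - y) := by gcongr
    _ = gL / (2 * bU) * (gU / (2 * bL)) * (x - 1 / (gU + 2 * bL)) := by
      linear_combination (-(gL / (2 * bU))) * bestReply_sub_one_div (x := x) hbL hgU
    _ ≤ x - 1 / (gU + 2 * bL) := mul_le_of_le_one_left (by linarith) hslope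

theorem orbits_reach_fixed_points_general
    (bU bL gU gL r xl xu xm : ℝ) (f : ℝ → ℝ)
    (h1 : bU ≥ gU) (h3 : bL ≥ gL) (h4 : gL ≥ 0)
    (h5 : 0 < bL) (h6 : bL < bU) (h7 : gL < gU)
    (hr : r = (gU - gL) / (bU - bL))
    (hxl : xl = 1 / (gL + 2 * bU * r))
    (hxu : xu = 1 / (gU + 2 * bL * r))
    (hxm : xm = 1 / gU)
    (hf1 : ∀ x : ℝ, 0 ≤ x → x ≤ xl → f x = (1 - gL * x) / (2 * bU))
    (hf2 : ∀ x : ℝ, xl ≤ x → x ≤ xu → f x = r * x)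
    (hf3 : ∀ x : ℝ, xu ≤ x → x ≤ xm → f x = (1 - gU * x) / (2 * bL))
    (hf4 : ∀ x : ℝ, xm ≤ x → f x = 0)
    (hr1 : r = 1) :
    ∀ x : ℝ, 0 ≤ x → ∃ n : ℕ,
      f (f^[n] x) = f^[n] x ∧
      xl ≤ f^[n] x ∧ f^[n] x ≤ xu ∧
      ∀ k : ℕ, f^[n + k] x = f^[n] x := by
  subst hr1
  rw [mul_one] at hxl hxu
  have hbU : 0 < bU := h5.trans h6
  have hgU : 0 < gU := h4.trans_lt h7
  have hd : gU - gL = bU - bL := (div_eq_one_iff_eq (sub_pos.2 h6).ne').1 hr.symm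
  have hlu : xl < xu := by
    rw [hxl, hxu]; exact one_div_lt_one_div_of_lt (by positivity) (by linarith)
  have hleft (x : ℝ) (hx0 : 0 ≤ x) (hxxl : x < xl) : xl ≤ f x ∧ f x ≤ xm := by
    rw [hf1 x hx0 hxxl.le, hxm]
    refine ⟨hxl ▸ one_div_le_bestReply hbU h4 (hxl ▸ hxxl.le), ?_⟩
    exact (bestReply_le_one_div_two_mul hbU h4 hx0).trans
      (one_div_le_one_div_of_le hgU (by linarith))
  have hright (x : ℝ) (hux : xu < x) : 0 ≤ f x ∧ f x ≤ xu := by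
    rcases le_or_gt x xm with hxxm | hmx
    · rw [hf3 x hux.le hxxm, hxu]
      exact ⟨bestReply_nonneg h5 (by rw [hxm, le_div_iff₀ hgU] at hxxm; linarith),
        bestReply_le_one_div h5 hgU.le (hxu ▸ hux.le)⟩
    · have hxl0 : 0 ≤ xl := by rw [hxl]; positivity
      rw [hf4 x hmx.le]
      exact ⟨le_rfl, hxl0.trans hlu.le⟩
  have hreturn (x : ℝ) (hux : xu < x) (hxxm : x ≤ xm) (hfxl : f x < xl) :
      f (f x) - xl ≤ x - xu := by
    rw [hf1 (f x) (hright x hux).1 hfxl.le, hf3 x hux.le hxxm, hxl, hxu]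
    exact bestReply_bestReply_sub_le h5 hbU h4 h3 hgU.le h1 (hxl ▸ hxu ▸ hlu.le) (hxu ▸ hux.le)
  intro x hx0
  obtain ⟨n, hn⟩ := exists_iterate_mem_Icc hlu hleft hright hreturn x hx0
  have hfix : f (f^[n] x) = f^[n] x := by rw [hf2 _ hn.1 hn.2, one_mul]
  exact ⟨n, hfix, hn.1, hn.2, fun k ↦ by rw [add_comm, iterate_add_apply, iterate_fixed hfix]⟩

/-- If r = 1, every forward orbit of f reaches, in finitely many
iterations, a fixed point lying in the segment [x_l, x_u] of fixed points. -/
theorem orbits_reach_fixed_points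
    (bU bL gU gL r xl xu xm : ℝ) (f : ℝ → ℝ)
    (h1 : bU ≥ gU) (h2 : gU ≥ bL) (h3 : bL ≥ gL) (h4 : gL ≥ 0)
    (h5 : 0 < bL) (h6 : bL < bU) (h7 : gL < gU)
    (hr : r = (gU - gL) / (bU - bL))
    (hxl : xl = 1 / (gL + 2 * bU * r))
    (hxu : xu = 1 / (gU + 2 * bL * r))
    (hxm : xm = 1 / gU)
    (hf1 : ∀ x : ℝ, 0 ≤ x → x ≤ xl → f x = (1 - gL * x) / (2 * bU))
    (hf2 : ∀ x : ℝ, xl ≤ x → x ≤ xu → f x = r * x)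
    (hf3 : ∀ x : ℝ, xu ≤ x → x ≤ xm → f x = (1 - gU * x) / (2 * bL))
    (hf4 : ∀ x : ℝ, xm ≤ x → f x = 0)
    (hr1 : r = 1) :
    ∀ x : ℝ, 0 ≤ x → ∃ n : ℕ,
      f (f^[n] x) = f^[n] x ∧
      xl ≤ f^[n] x ∧ f^[n] x ≤ xu ∧
      ∀ k : ℕ, f^[n + k] x = f^[n] x :=
  orbits_reach_fixed_points_general bU bL gU gL r xl xu xm f h1 h3 h4 h5 h6 h7 hr hxl hxu hxm hf1
    hf2 hf3 hf4 hr1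
end

section
/- If r > 1 and γ̄ < 2·b̲, then the fixed point x_r* = 1/(γ̄ + 2·b̲) of f is globally attracting: for every x ≥ 0 the iterates fⁿ(x) converge to x_r* as n → ∞. In particular f has no 2-cycle: if x ≥ 0 satisfies f(f(x)) = x, then x = x_r*. -/
/-!
On `[xu, xm]` the map is the line of slope `-gU / (2 * bL) ∈ (-1, 0)` through the fixed point
`x* = 1 / (gU + 2 * bL)`. Since `f (r * xu) ≥ xu`, the interval `[xu, r * xu] = [xu, f xu]` is
mapped into itself, so orbits that enter it converge geometrically to `x*`.

Every orbit from `[0, ∞)` enters it. A point beyond `r * xu` falls into `[0, r * xu]` in one step.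
A point of `[0, xu)` moves up by at least `(r - 1) * xl` in one step, unless it overshoots past
`r * xu`; that can only happen from `[0, xl]`, and then the next step lands in `[0, r * xu]` and
the two steps together still gain a fixed positive amount. Since `[0, xu)` is bounded, the orbit
cannot stay there forever. Finally, a `2`-cycle is an orbit with a constant subsequence, so it
sits at the limit `x*`.
-/

open Filter Topology Set Function

section Dynamics

variable {α : Type*}

theorem tendsto_iterate_of_mapsTo_of_dist_le [PseudoMetricSpace α] {f : α → α} {J : Set α}
    {p : α} {q : ℝ} (hJ : MapsTo f J J) (hq₀ : 0 ≤ q) (hq₁ : q < 1)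
    (hf : ∀ y ∈ J, dist (f y) p ≤ q * dist y p) {x : α} {N : ℕ} (hN : f^[N] x ∈ J) :
    Tendsto (fun n ↦ f^[n] x) atTop (𝓝 p) := by
  have hdist : ∀ k, dist (f^[k] (f^[N] x)) p ≤ q ^ k * dist (f^[N] x) p := by
    intro k
    induction k with
    | zero => simp
    | succ k ih =>
      rw [iterate_succ_apply', pow_succ', mul_assoc]
      exact (hf _ (hJ.iterate k hN)).trans (mul_le_mul_of_nonneg_left ih hq₀)
  have hlim : Tendsto (fun k ↦ f^[k] (f^[N] x)) atTop (𝓝 p) := by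
    rw [tendsto_iff_dist_tendsto_zero]
    refine squeeze_zero (fun _ ↦ dist_nonneg) hdist ?_
    simpa using (tendsto_pow_atTop_nhds_zero_of_lt_one hq₀ hq₁).mul_const (dist (f^[N] x) p)
  rw [← tendsto_add_atTop_iff_nat N]
  simpa only [iterate_add_apply] using hlim

theorem Function.IsPeriodicPt.eq_of_tendsto_iterate [TopologicalSpace α] [T2Space α]
    {f : α → α} {n : ℕ} {x p : α} (hx : IsPeriodicPt f n x) (hn : 0 < n)
    (h : Tendsto (fun k ↦ f^[k] x) atTop (𝓝 p)) : x = p := by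
  have hsub : Tendsto (fun k ↦ f^[n * k] x) atTop (𝓝 p) :=
    h.comp (tendsto_id.const_mul_atTop' hn)
  simp only [(hx.mul_const _).eq] at hsub
  exact tendsto_nhds_unique tendsto_const_nhds hsub

theorem exists_iterate_mem_of_forall_exists_iterate_add_le {f : α → α} {S J : Set α}
    (φ : α → ℝ) {B ε : ℝ} (hε : 0 < ε) (hB : ∀ z ∈ S, φ z ≤ B)
    (hstep : ∀ z ∈ S, ∃ n, f^[n] z ∈ J ∨ f^[n] z ∈ S ∧ φ z + ε ≤ φ (f^[n] z))
    {z : α} (hz : z ∈ S) : ∃ n, f^[n] z ∈ J := by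
  suffices key : ∀ m : ℕ, ∀ z ∈ S, B < φ z + m * ε → ∃ n, f^[n] z ∈ J by
    obtain ⟨m, hm⟩ := exists_nat_gt ((B - φ z) / ε)
    rw [div_lt_iff₀ hε] at hm
    exact key m z hz (by linarith)
  intro m
  induction m with
  | zero => intro z hz hlt; linarith [hB z hz, show B < φ z by simpa using hlt]
  | succ m ih =>
    intro z hz hlt
    obtain ⟨n, hJ | ⟨hS, hgain⟩⟩ := hstep z hz
    · exact ⟨n, hJ⟩
    · obtain ⟨k, hk⟩ := ih _ hS (by push_cast at hlt; linarith)
      exact ⟨k + n, by rwa [iterate_add_apply]⟩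

end Dynamics

structure WorstCaseBestReply (bU bL gU gL r xl xu xm : ℝ) (f : ℝ → ℝ) : Prop where
  gL_nonneg : 0 ≤ gL
  bL_pos : 0 < bL
  bL_lt_bU : bL < bU
  gL_lt_gU : gL < gU
  r_eq : r = (gU - gL) / (bU - bL)
  xl_eq : xl = 1 / (gL + 2 * bU * r)
  xu_eq : xu = 1 / (gU + 2 * bL * r)
  xm_eq : xm = 1 / gU
  apply_of_le_xl : ∀ x : ℝ, 0 ≤ x → x ≤ xl → f x = (1 - gL * x) / (2 * bU)
  apply_of_mem_Icc : ∀ x : ℝ, xl ≤ x → x ≤ xu → f x = r * x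
  apply_of_xu_le : ∀ x : ℝ, xu ≤ x → x ≤ xm → f x = (1 - gU * x) / (2 * bL)
  apply_of_xm_le : ∀ x : ℝ, xm ≤ x → f x = 0

namespace WorstCaseBestReply

variable {bU bL gU gL r xl xu xm : ℝ} {f : ℝ → ℝ}

theorem gU_pos (hf : WorstCaseBestReply bU bL gU gL r xl xu xm f) : 0 < gU :=
  hf.gL_nonneg.trans_lt hf.gL_lt_gU

theorem r_mul_sub (hf : WorstCaseBestReply bU bL gU gL r xl xu xm f) :
    r * (bU - bL) = gU - gL := by
  rw [hf.r_eq, div_mul_cancel₀ _ (sub_pos.mpr hf.bL_lt_bU).ne']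

theorem left_denom_pos (hf : WorstCaseBestReply bU bL gU gL r xl xu xm f) (hr : 1 < r) :
    0 < gL + 2 * bU * r := by
  have hbU := hf.bL_pos.trans hf.bL_lt_bU
  have hgL := hf.gL_nonneg
  positivity

theorem mid_denom_pos (hf : WorstCaseBestReply bU bL gU gL r xl xu xm f) (hr : 1 < r) :
    0 < gU + 2 * bL * r := by
  have hgU := hf.gU_pos
  have hbL := hf.bL_pos
  positivity

theorem xl_mul_left_denom (hf : WorstCaseBestReply bU bL gU gL r xl xu xm f) (hr : 1 < r) :
    xl * (gL + 2 * bU * r) = 1 := by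
  rw [hf.xl_eq, one_div_mul_cancel (hf.left_denom_pos hr).ne']

theorem xu_mul_mid_denom (hf : WorstCaseBestReply bU bL gU gL r xl xu xm f) (hr : 1 < r) :
    xu * (gU + 2 * bL * r) = 1 := by
  rw [hf.xu_eq, one_div_mul_cancel (hf.mid_denom_pos hr).ne']

theorem xl_pos (hf : WorstCaseBestReply bU bL gU gL r xl xu xm f) (hr : 1 < r) : 0 < xl := by
  rw [hf.xl_eq]
  exact one_div_pos.2 (hf.left_denom_pos hr)

theorem xu_pos (hf : WorstCaseBestReply bU bL gU gL r xl xu xm f) (hr : 1 < r) : 0 < xu := by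
  rw [hf.xu_eq]
  exact one_div_pos.2 (hf.mid_denom_pos hr)

theorem xl_le_xu (hf : WorstCaseBestReply bU bL gU gL r xl xu xm f) (hr : 1 < r) :
    xl ≤ xu := by
  rw [hf.xl_eq, hf.xu_eq]
  refine one_div_le_one_div_of_le (hf.mid_denom_pos hr) ?_
  linarith [hf.r_mul_sub, hf.gL_lt_gU]

theorem xu_le_xm (hf : WorstCaseBestReply bU bL gU gL r xl xu xm f) (hr : 1 < r) :
    xu ≤ xm := by
  rw [hf.xu_eq, hf.xm_eq]
  refine one_div_le_one_div_of_le hf.gU_pos ?_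
  nlinarith [hf.bL_pos]

theorem apply_xl (hf : WorstCaseBestReply bU bL gU gL r xl xu xm f) (hr : 1 < r) :
    f xl = r * xl :=
  hf.apply_of_mem_Icc xl le_rfl (hf.xl_le_xu hr)

theorem apply_xu (hf : WorstCaseBestReply bU bL gU gL r xl xu xm f) (hr : 1 < r) :
    f xu = r * xu :=
  hf.apply_of_mem_Icc xu (hf.xl_le_xu hr) le_rfl

theorem apply_xm (hf : WorstCaseBestReply bU bL gU gL r xl xu xm f) : f xm = 0 :=
  hf.apply_of_xm_le xm le_rfl

theorem antitoneOn_Icc_zero_xl (hf : WorstCaseBestReply bU bL gU gL r xl xu xm f) :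
    AntitoneOn f (Icc 0 xl) := by
  intro x ⟨hx₀, hxl⟩ y ⟨hy₀, hyl⟩ hxy
  rw [hf.apply_of_le_xl x hx₀ hxl, hf.apply_of_le_xl y hy₀ hyl]
  have hbU := hf.bL_pos.trans hf.bL_lt_bU
  gcongr
  exact hf.gL_nonneg

theorem antitoneOn_Icc_xu_xm (hf : WorstCaseBestReply bU bL gU gL r xl xu xm f) :
    AntitoneOn f (Icc xu xm) := by
  intro x ⟨hxu, hxm⟩ y ⟨hyu, hym⟩ hxy
  rw [hf.apply_of_xu_le x hxu hxm, hf.apply_of_xu_le y hyu hym]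
  have hbL := hf.bL_pos
  gcongr
  exact hf.gU_pos.le

theorem apply_zero_le_xm (hf : WorstCaseBestReply bU bL gU gL r xl xu xm f) (hr : 1 < r)
    (hs : gU < 2 * bL) : f 0 ≤ xm := by
  rw [hf.apply_of_le_xl 0 le_rfl (hf.xl_pos hr).le, hf.xm_eq, mul_zero, sub_zero]
  exact one_div_le_one_div_of_le hf.gU_pos (by linarith [hf.bL_lt_bU])

theorem r_mul_xu_le_xm (hf : WorstCaseBestReply bU bL gU gL r xl xu xm f) (hr : 1 < r)
    (hs : gU < 2 * bL) : r * xu ≤ xm := by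
  have hgU := hf.gU_pos
  calc r * xu = (1 - gU * xu) / (2 * bL) := by
        rw [← hf.apply_xu hr, hf.apply_of_xu_le xu le_rfl (hf.xu_le_xm hr)]
    _ ≤ 1 / (2 * bL) := by have hbL := hf.bL_pos; gcongr; nlinarith [hf.xu_pos hr]
    _ ≤ 1 / gU := one_div_le_one_div_of_le hgU hs.le
    _ = xm := hf.xm_eq.symm

theorem xu_le_apply_r_mul_xu (hf : WorstCaseBestReply bU bL gU gL r xl xu xm f) (hr : 1 < r)
    (hs : gU < 2 * bL) : xu ≤ f (r * xu) := by
  have hxu := hf.xu_pos hr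
  rw [hf.apply_of_xu_le _ (by nlinarith) (hf.r_mul_xu_le_xm hr hs),
    le_div_iff₀ (by linarith [hf.bL_pos])]
  nlinarith [hf.xu_mul_mid_denom hr, mul_pos (mul_pos (sub_pos.2 hr) (sub_pos.2 hs)) hxu]

theorem dist_apply_eq (hf : WorstCaseBestReply bU bL gU gL r xl xu xm f) {y : ℝ} (hxu : xu ≤ y)
    (hxm : y ≤ xm) :
    dist (f y) (1 / (gU + 2 * bL)) = gU / (2 * bL) * dist y (1 / (gU + 2 * bL)) := by
  have hbL := hf.bL_pos
  have hgU := hf.gU_pos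
  have hfy : f y - 1 / (gU + 2 * bL) = -(gU / (2 * bL) * (y - 1 / (gU + 2 * bL))) := by
    rw [hf.apply_of_xu_le y hxu hxm]
    field_simp
    ring
  rw [Real.dist_eq, Real.dist_eq, hfy, abs_neg, abs_mul, abs_of_pos (by positivity)]

theorem isFixedPt (hf : WorstCaseBestReply bU bL gU gL r xl xu xm f) (hr : 1 < r) :
    IsFixedPt f (1 / (gU + 2 * bL)) := by
  have hbL := hf.bL_pos
  have hgU := hf.gU_pos
  have hxu : xu ≤ 1 / (gU + 2 * bL) := by
    rw [hf.xu_eq]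
    exact one_div_le_one_div_of_le (by positivity) (by nlinarith)
  have hxm : 1 / (gU + 2 * bL) ≤ xm := by
    rw [hf.xm_eq]
    exact one_div_le_one_div_of_le hgU (by linarith)
  exact dist_eq_zero.1 (by rw [hf.dist_apply_eq hxu hxm, dist_self, mul_zero])

theorem mapsTo_Icc (hf : WorstCaseBestReply bU bL gU gL r xl xu xm f) (hr : 1 < r)
    (hs : gU < 2 * bL) : MapsTo f (Icc xu (r * xu)) (Icc xu (r * xu)) := by
  intro y ⟨hyu, hyr⟩
  have hanti := hf.antitoneOn_Icc_xu_xm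
  have hrxu : r * xu ≤ xm := hf.r_mul_xu_le_xm hr hs
  have hy : y ∈ Icc xu xm := ⟨hyu, hyr.trans hrxu⟩
  exact ⟨(hf.xu_le_apply_r_mul_xu hr hs).trans (hanti hy ⟨hyu.trans hyr, hrxu⟩ hyr),
    (hanti ⟨le_rfl, hf.xu_le_xm hr⟩ hy hyu).trans_eq (hf.apply_xu hr)⟩

theorem apply_mem_Icc_of_lt (hf : WorstCaseBestReply bU bL gU gL r xl xu xm f) (hr : 1 < r)
    {y : ℝ} (hy : r * xu < y) : f y ∈ Icc 0 (r * xu) := by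
  have hxu := hf.xu_pos hr
  have hxu_le : xu ≤ r * xu := le_mul_of_one_le_left hxu.le hr.le
  rcases le_or_gt y xm with hym | hym
  · have hanti := hf.antitoneOn_Icc_xu_xm
    have hxm : xu ≤ xm := hf.xu_le_xm hr
    have hy' : y ∈ Icc xu xm := ⟨hxu_le.trans hy.le, hym⟩
    exact ⟨hf.apply_xm ▸ hanti hy' ⟨hxm, le_rfl⟩ hym,
      (hanti ⟨le_rfl, hxm⟩ hy' hy'.1).trans_eq (hf.apply_xu hr)⟩
  · rw [hf.apply_of_xm_le y hym.le]
    exact ⟨le_rfl, by positivity⟩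

theorem add_le_apply (hf : WorstCaseBestReply bU bL gU gL r xl xu xm f) (hr : 1 < r) {z : ℝ}
    (hz₀ : 0 ≤ z) (hzu : z ≤ xu) : z + (r - 1) * xl ≤ f z := by
  rcases le_total z xl with hzl | hzl
  · calc z + (r - 1) * xl ≤ r * xl := by linarith
      _ = f xl := (hf.apply_xl hr).symm
      _ ≤ f z := hf.antitoneOn_Icc_zero_xl ⟨hz₀, hzl⟩ ⟨(hf.xl_pos hr).le, le_rfl⟩ hzl
  · rw [hf.apply_of_mem_Icc z hzl hzu]
    nlinarith

/-- `f (f z) - z` at `z = xl` when `f xl = r * xl` lies on the right branch. The map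
`z ↦ f (f z)` has slope `gU * gL / (4 * bL * bU) ≤ 1` on `[0, xl]`, so this bounds the two-step
gain from below on all of `[0, xl]`. -/
noncomputable def twoStepGain (bL gU r xl : ℝ) : ℝ := (1 - gU * (r * xl)) / (2 * bL) - xl

theorem twoStepGain_pos (hf : WorstCaseBestReply bU bL gU gL r xl xu xm f) (hr : 1 < r)
    (hs : gU < 2 * bL) : 0 < twoStepGain bL gU r xl := by
  have hxl := hf.xl_pos hr
  rw [twoStepGain, sub_pos, lt_div_iff₀ (by linarith [hf.bL_pos])]
  nlinarith [hf.xl_mul_left_denom hr, hf.r_mul_sub, hf.gL_lt_gU,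
    mul_pos (mul_pos (sub_pos.2 hr) (sub_pos.2 hs)) hxl, mul_pos (sub_pos.2 hf.gL_lt_gU) hxl]

theorem add_twoStepGain_le_apply_apply (hf : WorstCaseBestReply bU bL gU gL r xl xu xm f)
    (hr : 1 < r) (hs : gU < 2 * bL) {z : ℝ} (hz₀ : 0 ≤ z) (hzl : z ≤ xl) (hxu : xu ≤ f z)
    (hxm : f z ≤ xm) : z + twoStepGain bL gU r xl ≤ f (f z) := by
  have hbL := hf.bL_pos
  have hbU := hbL.trans hf.bL_lt_bU
  have hfz : f z = r * xl + gL * (xl - z) / (2 * bU) := by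
    rw [← hf.apply_xl hr, hf.apply_of_le_xl z hz₀ hzl,
      hf.apply_of_le_xl xl (hf.xl_pos hr).le le_rfl]
    ring
  have hslope : gU * (gL / (2 * bU)) ≤ 2 * bL :=
    calc gU * (gL / (2 * bU)) ≤ gU * 1 := by
          gcongr
          · exact hf.gU_pos.le
          · rw [div_le_one (by positivity)]; linarith [hf.gL_lt_gU, hf.bL_lt_bU]
      _ ≤ 2 * bL := by linarith
  have hdrop : gU * (gL * (xl - z) / (2 * bU)) / (2 * bL) ≤ xl - z := by
    rw [div_le_iff₀ (by positivity)]
    calc gU * (gL * (xl - z) / (2 * bU)) = gU * (gL / (2 * bU)) * (xl - z) := by ring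
      _ ≤ 2 * bL * (xl - z) := by gcongr
      _ = (xl - z) * (2 * bL) := by ring
  rw [hf.apply_of_xu_le (f z) hxu hxm, hfz, twoStepGain]
  calc z + ((1 - gU * (r * xl)) / (2 * bL) - xl)
      ≤ (1 - gU * (r * xl)) / (2 * bL) - gU * (gL * (xl - z) / (2 * bU)) / (2 * bL) := by
        linarith
    _ = (1 - gU * (r * xl + gL * (xl - z) / (2 * bU))) / (2 * bL) := by ring

theorem exists_iterate_mem_Icc_or_add_le (hf : WorstCaseBestReply bU bL gU gL r xl xu xm f)
    (hr : 1 < r) (hs : gU < 2 * bL) {δ : ℝ} (hδ₁ : δ ≤ (r - 1) * xl)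
    (hδ₂ : δ ≤ twoStepGain bL gU r xl) {z : ℝ} (hz : z ∈ Ico 0 xu) :
    ∃ n, f^[n] z ∈ Icc xu (r * xu) ∨ f^[n] z ∈ Ico 0 xu ∧ z + δ ≤ f^[n] z := by
  obtain ⟨hz₀, hzu⟩ := hz
  have hxl := hf.xl_pos hr
  have hgain := hf.add_le_apply hr hz₀ hzu.le
  rcases lt_or_ge (f z) xu with hfu | hfu
  · refine ⟨1, .inr ⟨⟨?_, hfu⟩, ?_⟩⟩ <;> rw [iterate_one] <;>
      linarith [mul_pos (sub_pos.2 hr) hxl]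
  rcases le_or_gt (f z) (r * xu) with hfr | hfr
  · exact ⟨1, .inl ⟨hfu, hfr⟩⟩
  have hzl : z ≤ xl := by
    by_contra! h
    rw [hf.apply_of_mem_Icc z h.le hzu.le] at hfr
    nlinarith
  have hfm : f z ≤ xm := (hf.antitoneOn_Icc_zero_xl ⟨le_rfl, hxl.le⟩ ⟨hz₀, hzl⟩ hz₀).trans
    (hf.apply_zero_le_xm hr hs)
  obtain ⟨hff₀, hffr⟩ := hf.apply_mem_Icc_of_lt hr hfr
  have hgain₂ := hf.add_twoStepGain_le_apply_apply hr hs hz₀ hzl hfu hfm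
  refine ⟨2, ?_⟩
  rw [show f^[2] z = f (f z) from rfl]
  rcases le_or_gt xu (f (f z)) with h | h
  · exact .inl ⟨h, hffr⟩
  · exact .inr ⟨⟨hff₀, h⟩, by linarith⟩

theorem exists_iterate_mem_Icc (hf : WorstCaseBestReply bU bL gU gL r xl xu xm f) (hr : 1 < r)
    (hs : gU < 2 * bL) {x : ℝ} (hx : 0 ≤ x) : ∃ n, f^[n] x ∈ Icc xu (r * xu) := by
  have hδ : 0 < min ((r - 1) * xl) (twoStepGain bL gU r xl) :=
    lt_min (mul_pos (sub_pos.2 hr) (hf.xl_pos hr)) (hf.twoStepGain_pos hr hs)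
  have hbelow : ∀ y ∈ Icc 0 (r * xu), ∃ n, f^[n] y ∈ Icc xu (r * xu) := by
    intro y ⟨hy₀, hyr⟩
    rcases lt_or_ge y xu with hyu | hyu
    · exact exists_iterate_mem_of_forall_exists_iterate_add_le id hδ (fun z hz ↦ hz.2.le)
        (fun z hz ↦ hf.exists_iterate_mem_Icc_or_add_le hr hs (min_le_left _ _)
          (min_le_right _ _) hz) ⟨hy₀, hyu⟩
    · exact ⟨0, hyu, hyr⟩
  rcases le_or_gt x (r * xu) with h | h
  · exact hbelow x ⟨hx, h⟩
  · obtain ⟨n, hn⟩ := hbelow (f x) (hf.apply_mem_Icc_of_lt hr h)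
    exact ⟨n + 1, by rwa [iterate_succ_apply]⟩

theorem tendsto_iterate (hf : WorstCaseBestReply bU bL gU gL r xl xu xm f) (hr : 1 < r)
    (hs : gU < 2 * bL) {x : ℝ} (hx : 0 ≤ x) :
    Tendsto (fun n ↦ f^[n] x) atTop (𝓝 (1 / (gU + 2 * bL))) := by
  have hbL := hf.bL_pos
  obtain ⟨N, hN⟩ := hf.exists_iterate_mem_Icc hr hs hx
  exact tendsto_iterate_of_mapsTo_of_dist_le (hf.mapsTo_Icc hr hs)
    (div_nonneg hf.gU_pos.le (by positivity)) ((div_lt_one (by positivity)).2 hs)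
    (fun y hy ↦ (hf.dist_apply_eq hy.1 (hy.2.trans (hf.r_mul_xu_le_xm hr hs))).le) hN

end WorstCaseBestReply

theorem right_fixed_point_globally_attracting_general
    (bU bL gU gL r xl xu xm : ℝ) (f : ℝ → ℝ)
    (h4 : gL ≥ 0)
    (h5 : 0 < bL) (h6 : bL < bU) (h7 : gL < gU)
    (hr : r = (gU - gL) / (bU - bL))
    (hxl : xl = 1 / (gL + 2 * bU * r))
    (hxu : xu = 1 / (gU + 2 * bL * r))
    (hxm : xm = 1 / gU)
    (hf1 : ∀ x : ℝ, 0 ≤ x → x ≤ xl → f x = (1 - gL * x) / (2 * bU))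
    (hf2 : ∀ x : ℝ, xl ≤ x → x ≤ xu → f x = r * x)
    (hf3 : ∀ x : ℝ, xu ≤ x → x ≤ xm → f x = (1 - gU * x) / (2 * bL))
    (hf4 : ∀ x : ℝ, xm ≤ x → f x = 0)
    (hrgt : 1 < r) (hslope : gU < 2 * bL) :
    f (1 / (gU + 2 * bL)) = 1 / (gU + 2 * bL) ∧
    (∀ x : ℝ, 0 ≤ x →
      Filter.Tendsto (fun n => f^[n] x) Filter.atTop (nhds (1 / (gU + 2 * bL)))) ∧
    (∀ x : ℝ, 0 ≤ x → f (f x) = x → x = 1 / (gU + 2 * bL)) := by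
  have hf : WorstCaseBestReply bU bL gU gL r xl xu xm f :=
    ⟨h4, h5, h6, h7, hr, hxl, hxu, hxm, hf1, hf2, hf3, hf4⟩
  have hconv := fun x (hx : 0 ≤ x) ↦ hf.tendsto_iterate hrgt hslope hx
  exact ⟨hf.isFixedPt hrgt, hconv, fun x hx hcycle ↦
    IsPeriodicPt.eq_of_tendsto_iterate (n := 2) hcycle two_pos (hconv x hx)⟩

/-- If r > 1 and γ̄ < 2b̲, the fixed point x_r* = 1/(γ̄ + 2b̲) of f
is globally attracting on [0,∞); in particular f has no 2-cycle. -/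
theorem right_fixed_point_globally_attracting
    (bU bL gU gL r xl xu xm : ℝ) (f : ℝ → ℝ)
    (h1 : bU ≥ gU) (h2 : gU ≥ bL) (h3 : bL ≥ gL) (h4 : gL ≥ 0)
    (h5 : 0 < bL) (h6 : bL < bU) (h7 : gL < gU)
    (hr : r = (gU - gL) / (bU - bL))
    (hxl : xl = 1 / (gL + 2 * bU * r))
    (hxu : xu = 1 / (gU + 2 * bL * r))
    (hxm : xm = 1 / gU)
    (hf1 : ∀ x : ℝ, 0 ≤ x → x ≤ xl → f x = (1 - gL * x) / (2 * bU))
    (hf2 : ∀ x : ℝ, xl ≤ x → x ≤ xu → f x = r * x)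
    (hf3 : ∀ x : ℝ, xu ≤ x → x ≤ xm → f x = (1 - gU * x) / (2 * bL))
    (hf4 : ∀ x : ℝ, xm ≤ x → f x = 0)
    (hrgt : 1 < r) (hslope : gU < 2 * bL) :
    f (1 / (gU + 2 * bL)) = 1 / (gU + 2 * bL) ∧
    (∀ x : ℝ, 0 ≤ x →
      Filter.Tendsto (fun n => f^[n] x) Filter.atTop (nhds (1 / (gU + 2 * bL)))) ∧
    (∀ x : ℝ, 0 ≤ x → f (f x) = x → x = 1 / (gU + 2 * bL)) :=
  right_fixed_point_globally_attracting_general bU bL gU gL r xl xu xm f h4 h5 h6 h7 hr hxl hxu hxm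
    hf1 hf2 hf3 hf4 hrgt hslope
end

section
/- If r > 1 and γ̄ = 2·b̲, then the interval [x_u, f(x_u)] is filled with 2-cycles of f: f(f(x)) = x for every x ∈ [x_u, f(x_u)] (where f(x_u) = r·x_u), and this interval is globally absorbing, i.e. for every x ≥ 0 there exists n ≥ 0 such that fⁿ(x) ∈ [x_u, f(x_u)]. -/
/-- If r > 1 and γ̄ = 2b̲ (degenerate flip bifurcation), the interval
[x_u, f(x_u)] is filled with 2-cycles of f (with f(x_u) = r·x_u) and is globally
absorbing. -/
theorem segment_of_two_cycles
    (bU bL gU gL r xl xu xm : ℝ) (f : ℝ → ℝ)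
    (h1 : bU ≥ gU) (h2 : gU ≥ bL) (h3 : bL ≥ gL) (h4 : gL ≥ 0)
    (h5 : 0 < bL) (h6 : bL < bU) (h7 : gL < gU)
    (hr : r = (gU - gL) / (bU - bL))
    (hxl : xl = 1 / (gL + 2 * bU * r))
    (hxu : xu = 1 / (gU + 2 * bL * r))
    (hxm : xm = 1 / gU)
    (hf1 : ∀ x : ℝ, 0 ≤ x → x ≤ xl → f x = (1 - gL * x) / (2 * bU))
    (hf2 : ∀ x : ℝ, xl ≤ x → x ≤ xu → f x = r * x)
    (hf3 : ∀ x : ℝ, xu ≤ x → x ≤ xm → f x = (1 - gU * x) / (2 * bL))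
    (hf4 : ∀ x : ℝ, xm ≤ x → f x = 0)
    (hrgt : 1 < r) (hslope : gU = 2 * bL) :
    f xu = r * xu ∧
    (∀ x : ℝ, xu ≤ x → x ≤ r * xu → f (f x) = x) ∧
    (∀ x : ℝ, 0 ≤ x → ∃ n : ℕ, xu ≤ f^[n] x ∧ f^[n] x ≤ r * xu) := by
  have hbU : 0 < bU := lt_trans h5 h6
  have hgU : 0 < gU := lt_of_le_of_lt h4 h7
  have hrpos : 0 < r := lt_trans one_pos hrgt
  have hbd : 0 < bU - bL := by linarith
  have hrkey : r * (bU - bL) = gU - gL := by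
    rw [hr]; field_simp
  -- denominators
  have hdu : 0 < gU + 2 * bL * r := by positivity
  have hdl : 0 < gL + 2 * bU * r := by positivity
  have hxu_pos : 0 < xu := by rw [hxu]; positivity
  have hxl_pos : 0 < xl := by rw [hxl]; positivity
  have hxm_pos : 0 < xm := by rw [hxm]; positivity
  have hxl_le_xu : xl ≤ xu := by
    rw [hxl, hxu]
    apply one_div_le_one_div_of_le hdu
    nlinarith
  have hxu_le_xm : xu ≤ xm := by
    rw [hxu, hxm]
    apply one_div_le_one_div_of_le hgU
    nlinarith
  have hxm_eq : xm = (1 + r) * xu := by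
    rw [hxm, hxu, hslope]
    field_simp
  have hrxu : r * xu = xm - xu := by rw [hxm_eq]; ring
  have hxu_lt_rxu : xu < r * xu := by nlinarith
  -- f xu = r xu
  have hfxu : f xu = r * xu := hf2 xu hxl_le_xu le_rfl
  -- lemma A: f x = xm - x on [xu, xm]
  have hA : ∀ x : ℝ, xu ≤ x → x ≤ xm → f x = xm - x := by
    intro x hx1 hx2
    rw [hf3 x hx1 hx2, hslope, hxm, hslope]
    field_simp
  -- continuity identity at xl : (1 - gL*xl)/(2bU) = r*xl
  have hcl : (1 - gL * xl) / (2 * bU) = r * xl := by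
    have : gL * xl + 2 * bU * r * xl = 1 := by
      rw [hxl]; field_simp
    field_simp
    linarith
  -- 1/(2bU) ≤ r * xu
  have hub : 1 / (2 * bU) ≤ r * xu := by
    have h : xu = 1 / (2 * bL + 2 * bL * r) := by rw [hxu, hslope]
    rw [h, mul_one_div, div_le_div_iff₀ (by positivity) (by positivity)]
    nlinarith
  -- key induction: if xl ≤ y ≤ xu and r^n * y reaches xu, then some iterate lands in the box
  have key : ∀ n : ℕ, ∀ y : ℝ, xl ≤ y → y ≤ xu → xu ≤ r ^ n * y →
      ∃ m : ℕ, xu ≤ f^[m] y ∧ f^[m] y ≤ r * xu := by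
    intro n
    induction n with
    | zero =>
      intro y hy1 hy2 hy3
      simp only [pow_zero, one_mul] at hy3
      exact ⟨0, by simpa using hy3, by simpa using hy2.trans hxu_lt_rxu.le⟩
    | succ n ih =>
      intro y hy1 hy2 hy3
      have hfy : f y = r * y := hf2 y hy1 hy2
      by_cases hc : xu ≤ r * y
      · refine ⟨1, ?_, ?_⟩
        · simpa [hfy] using hc
        · simp only [Function.iterate_one, hfy]
          exact mul_le_mul_of_nonneg_left hy2 hrpos.le
      · push_neg at hc
        have hy0 : 0 < y := lt_of_lt_of_le hxl_pos hy1
        have h1' : xl ≤ r * y := hy1.trans (by nlinarith)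
        have h3' : xu ≤ r ^ n * (r * y) := by
          have : r ^ (n + 1) * y = r ^ n * (r * y) := by ring
          linarith [hy3.trans_eq this]
        obtain ⟨m, hm1, hm2⟩ := ih (r * y) h1' hc.le h3'
        refine ⟨m + 1, ?_, ?_⟩
        · rwa [Function.iterate_succ_apply, hfy]
        · rwa [Function.iterate_succ_apply, hfy]
  -- lemma C : from [xl, xu]
  have hC : ∀ y : ℝ, xl ≤ y → y ≤ xu →
      ∃ m : ℕ, xu ≤ f^[m] y ∧ f^[m] y ≤ r * xu := by
    intro y hy1 hy2
    obtain ⟨n, hn⟩ := pow_unbounded_of_one_lt (xu / xl) hrgt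
    refine key n y hy1 hy2 ?_
    have hy0 : 0 < y := lt_of_lt_of_le hxl_pos hy1
    have : xu / xl < r ^ n := hn
    have hx : xu < r ^ n * xl := by
      rwa [div_lt_iff₀ hxl_pos] at this
    have : r ^ n * xl ≤ r ^ n * y := by
      apply mul_le_mul_of_nonneg_left hy1 (by positivity)
    linarith
  -- lemma B : from [0, xu]
  have hB : ∀ y : ℝ, 0 ≤ y → y ≤ xu →
      ∃ m : ℕ, xu ≤ f^[m] y ∧ f^[m] y ≤ r * xu := by
    intro y hy0 hy2
    by_cases hyl : xl ≤ y
    · exact hC y hyl hy2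
    · push_neg at hyl
      have hfy : f y = (1 - gL * y) / (2 * bU) := hf1 y hy0 hyl.le
      have hfy_ge : r * xl ≤ f y := by
        rw [hfy, ← hcl]
        have hmul : gL * y ≤ gL * xl := mul_le_mul_of_nonneg_left hyl.le h4
        gcongr
        all_goals linarith
      have hfy_le : f y ≤ r * xu := by
        rw [hfy]
        refine le_trans ?_ hub
        have hmul : 0 ≤ gL * y := mul_nonneg h4 hy0
        gcongr
        all_goals linarith
      have hstep : xl ≤ r * xl := le_mul_of_one_le_left hxl_pos.le hrgt.le
      have hxl_le_fy : xl ≤ f y := le_trans hstep hfy_ge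
      by_cases hc : xu ≤ f y
      · exact ⟨1, by simpa using hc, by simpa using hfy_le⟩
      · push_neg at hc
        obtain ⟨m, hm1, hm2⟩ := hC (f y) hxl_le_fy hc.le
        exact ⟨m + 1, by rwa [Function.iterate_succ_apply],
          by rwa [Function.iterate_succ_apply]⟩
  refine ⟨hfxu, ?_, ?_⟩
  · -- 2-cycles
    intro x hx1 hx2
    have hx2' : x ≤ xm := by linarith
    have hfx : f x = xm - x := hA x hx1 hx2'
    have hge : xu ≤ xm - x := by linarith
    have hle : xm - x ≤ xm := by linarith
    rw [hfx, hA (xm - x) hge hle]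
    ring
  · -- global absorption
    intro x hx0
    rcases le_or_gt x xu with hcase | hcase
    · exact hB x hx0 hcase
    rcases le_or_gt x (r * xu) with hcase2 | hcase2
    · exact ⟨0, by simpa using hcase.le, by simpa using hcase2⟩
    rcases le_or_gt x xm with hcase3 | hcase3
    · -- r xu < x ≤ xm : f x = xm - x ∈ [0, xu)
      have hfx : f x = xm - x := hA x hcase.le hcase3
      have h0 : 0 ≤ f x := by rw [hfx]; linarith
      have h1 : f x ≤ xu := by rw [hfx]; linarith
      obtain ⟨m, hm1, hm2⟩ := hB (f x) h0 h1
      exact ⟨m + 1, by rwa [Function.iterate_succ_apply],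
        by rwa [Function.iterate_succ_apply]⟩
    · -- x > xm : f x = 0
      have hfx : f x = 0 := hf4 x hcase3.le
      obtain ⟨m, hm1, hm2⟩ := hB 0 le_rfl hxu_pos.le
      refine ⟨m + 1, ?_, ?_⟩
      · rwa [Function.iterate_succ_apply, hfx]
      · rwa [Function.iterate_succ_apply, hfx]
end

section
/- If r > 1 and γ̄ > 2·b̲, then f has a 2-cycle distinct from its fixed point: there exist x₁, x₂ ≥ 0 with x₁ ≠ x₂ such that f(x₁) = x₂ and f(x₂) = x₁. -/
/-!
The cycle straddles the kink `x_u`: `x₁` lies on the increasing branch `f x = r x` and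
`x₂ = r x₁` on the decreasing branch `f x = (1 - γ̄ x) / (2 b̲)`. Closing the cycle,
`x₁ = (1 - γ̄ r x₁) / (2 b̲)`, gives `x₁ = 1 / (2 b̲ + γ̄ r)`; the conditions `r > 1` and
`γ̄ > 2 b̲` are what place `x₁` and `x₂` in the ranges of those two branches.
-/

section TwoCycle

variable {bU bL gU gL r : ℝ}

theorem lowerKink_le_twoCycleLeft (hr : r * (bU - bL) = gU - gL) (hgb : gU ≤ bU)
    (hbL : 0 ≤ bL) (hb : bL ≤ bU) (hr1 : 1 ≤ r) (hD : 0 < 2 * bL + gU * r) :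
    1 / (gL + 2 * bU * r) ≤ 1 / (2 * bL + gU * r) := by
  apply one_div_le_one_div_of_le hD
  -- eliminating `gL` by `hr`, the difference is `(r - 1) (bU - gU + bL) + (bU - bL)`
  nlinarith [mul_nonneg (sub_nonneg.mpr hr1) (by linarith : 0 ≤ bU - gU + bL)]

theorem twoCycleLeft_le_upperKink (hslope : 2 * bL ≤ gU) (hr1 : 1 ≤ r)
    (hu : 0 < gU + 2 * bL * r) :
    1 / (2 * bL + gU * r) ≤ 1 / (gU + 2 * bL * r) :=
  one_div_le_one_div_of_le hu <| by
    nlinarith [mul_nonneg (sub_nonneg.mpr hr1) (sub_nonneg.mpr hslope)]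

theorem upperKink_le_twoCycleRight (hbL : 0 ≤ bL) (hr1 : 1 ≤ r)
    (hu : 0 < gU + 2 * bL * r) (hD : 0 < 2 * bL + gU * r) :
    1 / (gU + 2 * bL * r) ≤ r / (2 * bL + gU * r) := by
  rw [div_le_div_iff₀ hu hD]
  nlinarith [mul_nonneg hbL (mul_nonneg (sub_nonneg.mpr hr1) (by linarith : (0 : ℝ) ≤ r + 1))]

theorem twoCycleRight_le_cutoff (hbL : 0 ≤ bL) (hgU : 0 < gU) (hD : 0 < 2 * bL + gU * r) :
    r / (2 * bL + gU * r) ≤ 1 / gU := by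
  rw [div_le_div_iff₀ hD hgU]
  linarith

theorem decreasingBranch_twoCycleRight (hbL : bL ≠ 0) (hD : 2 * bL + gU * r ≠ 0) :
    (1 - gU * (r / (2 * bL + gU * r))) / (2 * bL) = 1 / (2 * bL + gU * r) := by
  field_simp
  ring

end TwoCycle

theorem existence_of_two_cycle_general
    (bU bL gU gL r xl xu xm : ℝ) (f : ℝ → ℝ)
    (h1 : bU ≥ gU)
    (h5 : 0 < bL) (h6 : bL < bU)
    (hr : r = (gU - gL) / (bU - bL))
    (hxl : xl = 1 / (gL + 2 * bU * r))
    (hxu : xu = 1 / (gU + 2 * bL * r))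
    (hxm : xm = 1 / gU)
    (hf2 : ∀ x : ℝ, xl ≤ x → x ≤ xu → f x = r * x)
    (hf3 : ∀ x : ℝ, xu ≤ x → x ≤ xm → f x = (1 - gU * x) / (2 * bL))
    (hrgt : 1 < r) (hslope : 2 * bL < gU) :
    ∃ x₁ x₂ : ℝ, 0 ≤ x₁ ∧ 0 ≤ x₂ ∧ x₁ ≠ x₂ ∧ f x₁ = x₂ ∧ f x₂ = x₁ := by
  have hgU : 0 < gU := by linarith
  have hr0 : 0 < r := by linarith
  have hrb : r * (bU - bL) = gU - gL := by rw [hr, div_mul_cancel₀ _ (sub_ne_zero.mpr h6.ne')]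
  have hD : 0 < 2 * bL + gU * r := by positivity
  have hu : 0 < gU + 2 * bL * r := by positivity
  subst hxl hxu hxm
  refine ⟨1 / (2 * bL + gU * r), r / (2 * bL + gU * r), by positivity, by positivity,
    (div_lt_div_of_pos_right hrgt hD).ne, ?_, ?_⟩
  · rw [hf2 _ (lowerKink_le_twoCycleLeft hrb h1 h5.le h6.le hrgt.le hD)
      (twoCycleLeft_le_upperKink hslope.le hrgt.le hu), mul_one_div]
  · rw [hf3 _ (upperKink_le_twoCycleRight h5.le hrgt.le hu hD)
      (twoCycleRight_le_cutoff h5.le hgU hD), decreasingBranch_twoCycleRight h5.ne' hD.ne']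

/-- If r > 1 and γ̄ > 2b̲, f has a 2-cycle distinct from its fixed
point. -/
theorem existence_of_two_cycle
    (bU bL gU gL r xl xu xm : ℝ) (f : ℝ → ℝ)
    (h1 : bU ≥ gU) (h2 : gU ≥ bL) (h3 : bL ≥ gL) (h4 : gL ≥ 0)
    (h5 : 0 < bL) (h6 : bL < bU) (h7 : gL < gU)
    (hr : r = (gU - gL) / (bU - bL))
    (hxl : xl = 1 / (gL + 2 * bU * r))
    (hxu : xu = 1 / (gU + 2 * bL * r))
    (hxm : xm = 1 / gU)
    (hf1 : ∀ x : ℝ, 0 ≤ x → x ≤ xl → f x = (1 - gL * x) / (2 * bU))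
    (hf2 : ∀ x : ℝ, xl ≤ x → x ≤ xu → f x = r * x)
    (hf3 : ∀ x : ℝ, xu ≤ x → x ≤ xm → f x = (1 - gU * x) / (2 * bL))
    (hf4 : ∀ x : ℝ, xm ≤ x → f x = 0)
    (hrgt : 1 < r) (hslope : 2 * bL < gU) :
    ∃ x₁ x₂ : ℝ, 0 ≤ x₁ ∧ 0 ≤ x₂ ∧ x₁ ≠ x₂ ∧ f x₁ = x₂ ∧ f x₂ = x₁ :=
  existence_of_two_cycle_general bU bL gU gL r xl xu xm f h1 h5 h6 hr hxl hxu hxm hf2 hf3 hrgt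
    hslope
end

section
/- Let x₁, …, xₙ be a cycle of f of least period n with n odd, i.e. the points x₁, …, xₙ are pairwise distinct, f(xᵢ) = xᵢ₊₁ for 1 ≤ i < n, and f(xₙ) = x₁. Then for every pair of indices i ≠ j, the point (xᵢ, xⱼ) is a periodic point of T of least period exactly 2n, while each diagonal point (xᵢ, xᵢ) is a periodic point of T of least period exactly n. -/
/-- If x₀, …, x_{n-1} is a cycle of f of least period n with n odd,
then each off-diagonal point (xᵢ, xⱼ), i ≠ j, is a periodic point of
T(x,y) = (f y, f x) of least period exactly 2n, while each diagonal point
(xᵢ, xᵢ) has least period exactly n. -/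
theorem odd_cycle_periods_of_T {X : Type*} (f : X → X) (T : X × X → X × X)
    (hT : ∀ x y : X, T (x, y) = (f y, f x))
    (n : ℕ) (hn : Odd n) (x : ℕ → X)
    (hinj : ∀ i j : ℕ, i < n → j < n → x i = x j → i = j)
    (hcyc : ∀ i : ℕ, i < n → f (x i) = x ((i + 1) % n)) :
    (∀ i j : ℕ, i < n → j < n → i ≠ j →
      Function.minimalPeriod T (x i, x j) = 2 * n) ∧
    (∀ i : ℕ, i < n → Function.minimalPeriod T (x i, x i) = n) := by
  obtain ⟨K, hK⟩ := hn
  have hn0 : 0 < n := by omega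
  -- iterates of f on the cycle
  have hfk : ∀ k i, i < n → f^[k] (x i) = x ((i + k) % n) := by
    intro k
    induction k with
    | zero => intro i hi; simp [Nat.mod_eq_of_lt hi]
    | succ k ih =>
      intro i hi
      rw [Function.iterate_succ_apply', ih i hi,
        hcyc _ (Nat.mod_lt _ hn0), Nat.mod_add_mod, ← Nat.add_assoc]
  -- iterates of T
  have hTk : ∀ k a b, T^[k] (a, b) =
      if Even k then (f^[k] a, f^[k] b) else (f^[k] b, f^[k] a) := by
    intro k
    induction k with
    | zero => intro a b; simp
    | succ k ih =>
      intro a b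
      rw [Function.iterate_succ_apply, hT, ih (f b) (f a),
        ← Function.iterate_succ_apply f k a, ← Function.iterate_succ_apply f k b]
      by_cases h : Even k
      · rw [if_pos h, if_neg (by simp [Nat.even_add_one, h])]
      · rw [if_neg h, if_pos (Nat.even_add_one.mpr h)]
  -- reduce index equations mod n
  have hred : ∀ m i, i < n → (i + m) % n = (i + m % n) % n := by
    intro m i hi
    rw [Nat.add_mod, Nat.mod_eq_of_lt hi]
  -- compute (i + r) % n for r < n by cases
  have hcase : ∀ r i, r < n → i < n →
      (i + r) % n = i + r ∧ i + r < n ∨ (i + r) % n = i + r - n ∧ n ≤ i + r := by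
    intro r i hr hi
    rcases lt_or_ge (i + r) n with h | h
    · exact Or.inl ⟨Nat.mod_eq_of_lt h, h⟩
    · refine Or.inr ⟨?_, h⟩
      rw [Nat.mod_eq_sub_mod h, Nat.mod_eq_of_lt (by omega)]
  -- key: a fixed index forces n ∣ m
  have hmod : ∀ m i, i < n → (i + m) % n = i → n ∣ m := by
    intro m i hi h
    rw [hred m i hi] at h
    have hr : m % n < n := Nat.mod_lt _ hn0
    rcases hcase (m % n) i hr hi with ⟨h2, h2'⟩ | ⟨h2, h2'⟩ <;> rw [h2] at h
    · exact Nat.dvd_of_mod_eq_zero (by omega)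
    · omega
  -- periodicity of f^[n] on the cycle
  have hfn : ∀ i, i < n → f^[n] (x i) = x i := by
    intro i hi
    rw [hfk n i hi, Nat.add_mod_right, Nat.mod_eq_of_lt hi]
  have hfn2 : ∀ i, i < n → f^[2 * n] (x i) = x i := by
    intro i hi
    rw [two_mul, Function.iterate_add_apply, hfn i hi, hfn i hi]
  have hnotE : ¬ Even n := by simp [Nat.even_iff]; omega
  constructor
  · -- off-diagonal case
    intro i j hi hj hij
    have hper : Function.IsPeriodicPt T (2 * n) (x i, x j) := by
      show T^[2 * n] (x i, x j) = (x i, x j)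
      rw [hTk, if_pos ⟨n, two_mul n⟩, hfn2 i hi, hfn2 j hj]
    have hdvd : Function.minimalPeriod T (x i, x j) ∣ 2 * n :=
      hper.minimalPeriod_dvd
    set m := Function.minimalPeriod T (x i, x j) with hm
    have hmpos : 0 < m := hper.minimalPeriod_pos (by omega)
    have hmper : T^[m] (x i, x j) = (x i, x j) :=
      Function.isPeriodicPt_minimalPeriod T (x i, x j)
    rw [hTk] at hmper
    -- m cannot be odd
    rcases Nat.even_or_odd m with hev | hod
    · rw [if_pos hev] at hmper
      have h1 : f^[m] (x i) = x i := congrArg Prod.fst hmper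
      rw [hfk m i hi] at h1
      have hn_dvd : n ∣ m := hmod m i hi (hinj _ _ (Nat.mod_lt _ hn0) hi h1)
      have h2dvd : 2 ∣ m := hev.two_dvd
      have hcop : Nat.Coprime 2 n := Nat.coprime_two_left.mpr ⟨K, hK⟩
      have : 2 * n ∣ m := Nat.Coprime.mul_dvd_of_dvd_of_dvd hcop h2dvd hn_dvd
      exact Nat.dvd_antisymm hdvd this
    · exfalso
      rw [if_neg (Nat.not_even_iff_odd.symm.mp hod)] at hmper
      have h1 : f^[m] (x j) = x i := congrArg Prod.fst hmper
      have h2 : f^[m] (x i) = x j := congrArg Prod.snd hmper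
      rw [hfk m j hj] at h1
      rw [hfk m i hi] at h2
      have e1 : (j + m) % n = i := hinj _ _ (Nat.mod_lt _ hn0) hi h1
      have e2 : (i + m) % n = j := hinj _ _ (Nat.mod_lt _ hn0) hj h2
      rw [hred m j hj] at e1
      rw [hred m i hi] at e2
      have hr : m % n < n := Nat.mod_lt _ hn0
      -- m odd: m % n parity vs n odd
      have hmodd : Odd m := hod
      obtain ⟨M, hM⟩ := hmodd
      rcases hcase (m % n) j hr hj with ⟨h3, h3'⟩ | ⟨h3, h3'⟩ <;>
        rcases hcase (m % n) i hr hi with ⟨h4, h4'⟩ | ⟨h4, h4'⟩ <;>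
          rw [h3] at e1 <;> rw [h4] at e2 <;> omega
  · -- diagonal case
    intro i hi
    have hper : Function.IsPeriodicPt T n (x i, x i) := by
      show T^[n] (x i, x i) = (x i, x i)
      rw [hTk, if_neg hnotE, hfn i hi]
    have hdvd : Function.minimalPeriod T (x i, x i) ∣ n := hper.minimalPeriod_dvd
    set m := Function.minimalPeriod T (x i, x i) with hm
    have hmpos : 0 < m := hper.minimalPeriod_pos hn0
    have hmper : T^[m] (x i, x i) = (x i, x i) :=
      Function.isPeriodicPt_minimalPeriod T (x i, x i)
    rw [hTk] at hmper
    have h1 : f^[m] (x i) = x i := by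
      rcases Nat.even_or_odd m with hev | hod
      · rw [if_pos hev] at hmper; exact congrArg Prod.fst hmper
      · rw [if_neg (Nat.not_even_iff_odd.symm.mp hod)] at hmper
        exact congrArg Prod.fst hmper
    rw [hfk m i hi] at h1
    have : n ∣ m := hmod m i hi (hinj _ _ (Nat.mod_lt _ hn0) hi h1)
    exact Nat.dvd_antisymm hdvd this
end

section
/- Let x be a periodic point of f of least period n ≥ 1 and y a periodic point of f of least period m ≥ 1, and assume the forward orbits {fᵏ(x) : k ≥ 0} and {fᵏ(y) : k ≥ 0} are disjoint. Let L be the least common multiple of n and m. Then (x, y) is a periodic point of T whose least period equals 2L if both n and m are odd, and equals L if n or m is even. -/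
/-- If x, y are periodic points of f of least periods n, m ≥ 1 with
disjoint forward orbits, and L = lcm(n,m), then the least period of (x,y) under
T(x,y) = (f y, f x) equals 2L if both n and m are odd, and L if n or m is even. -/
theorem doubly_generated_cycle_period {X : Type*} (f : X → X) (T : X × X → X × X)
    (hT : ∀ x y : X, T (x, y) = (f y, f x))
    (x y : X) (n m : ℕ) (hn : 1 ≤ n) (hm : 1 ≤ m)
    (hx : Function.minimalPeriod f x = n)
    (hy : Function.minimalPeriod f y = m)
    (hdisj : ∀ k l : ℕ, f^[k] x ≠ f^[l] y) :
    (Odd n → Odd m → Function.minimalPeriod T (x, y) = 2 * Nat.lcm n m) ∧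
    ((Even n ∨ Even m) → Function.minimalPeriod T (x, y) = Nat.lcm n m) := by
  set L := Nat.lcm n m with hL
  have hLpos : 0 < L := Nat.pos_of_ne_zero (Nat.lcm_ne_zero (by omega) (by omega))
  have key : ∀ j : ℕ, T^[j] (x, y) =
      if Even j then (f^[j] x, f^[j] y) else (f^[j] y, f^[j] x) := by
    intro j
    induction j with
    | zero => simp
    | succ k ih =>
      rw [Function.iterate_succ_apply', ih]
      by_cases h : Even k
      · simp [h, Nat.even_add_one, hT, Function.iterate_succ_apply']
      · simp [h, Nat.even_add_one, hT, Function.iterate_succ_apply']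
  have hiff : ∀ c : ℕ, Function.IsPeriodicPt T c (x, y) ↔ (Even c ∧ L ∣ c) := by
    intro c
    constructor
    · intro h
      have hc : T^[c] (x, y) = (x, y) := h
      rw [key c] at hc
      by_cases he : Even c
      · simp only [he, if_true] at hc
        obtain ⟨h1, h2⟩ := Prod.mk.injEq .. ▸ hc
        have hpx : Function.IsPeriodicPt f c x := h1
        have hpy : Function.IsPeriodicPt f c y := h2
        refine ⟨he, Nat.lcm_dvd ?_ ?_⟩
        · rw [← hx]; exact hpx.minimalPeriod_dvd
        · rw [← hy]; exact hpy.minimalPeriod_dvd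
      · simp only [he, if_false] at hc
        have h1 : f^[c] y = x := (Prod.mk.injEq .. ▸ hc).1
        exact absurd h1.symm (by simpa using hdisj 0 c)
    · rintro ⟨he, hd⟩
      have hnc : n ∣ c := dvd_trans (Nat.dvd_lcm_left n m) hd
      have hmc : m ∣ c := dvd_trans (Nat.dvd_lcm_right n m) hd
      have h1 : f^[c] x = x :=
        Function.isPeriodicPt_iff_minimalPeriod_dvd.mpr (hx ▸ hnc)
      have h2 : f^[c] y = y :=
        Function.isPeriodicPt_iff_minimalPeriod_dvd.mpr (hy ▸ hmc)
      show T^[c] (x, y) = (x, y)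
      rw [key c]
      simp [he, h1, h2]
  set P := Function.minimalPeriod T (x, y) with hP
  have hPprop := (hiff P).1 (Function.isPeriodicPt_minimalPeriod T (x, y))
  constructor
  · intro hon hom
    have hLodd : Odd L := by
      rw [Nat.odd_iff] at hon hom ⊢
      by_contra hc
      have h2 : 2 ∣ L := by omega
      have h3 : 2 ∣ n * m := h2.trans (Nat.lcm_dvd_mul n m)
      rcases (Nat.prime_two.dvd_mul).1 h3 with h | h <;> omega
    have hper : Function.IsPeriodicPt T (2 * L) (x, y) :=
      (hiff _).2 ⟨even_two_mul L, dvd_mul_left L 2⟩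
    have hdvd : P ∣ 2 * L := hper.minimalPeriod_dvd
    have h2L : 2 * L ∣ P := by
      refine Nat.Coprime.mul_dvd_of_dvd_of_dvd ?_ hPprop.1.two_dvd hPprop.2
      exact (Nat.coprime_two_left).2 hLodd
    exact Nat.dvd_antisymm hdvd h2L
  · intro hev
    have hLeven : Even L := by
      have h2 : 2 ∣ L := by
        rcases hev with h | h
        · exact h.two_dvd.trans (Nat.dvd_lcm_left n m)
        · exact h.two_dvd.trans (Nat.dvd_lcm_right n m)
      exact Nat.even_iff.2 (by omega)
    have hper : Function.IsPeriodicPt T L (x, y) := (hiff _).2 ⟨hLeven, dvd_rfl⟩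
    exact Nat.dvd_antisymm hper.minimalPeriod_dvd hPprop.2
end
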